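/- arXiv:2112.00518 — 6 statements merged into one kernel-verified Lean document; each statement's English description precedes it below -/
import Mathlib

section
/- For every composition α=(α_1,…,α_{2s}) of n with an even number of parts, the rank sequence r̄(α)=(r̄_0,…,r̄_n) of the circular fence poset F̄(α) is symmetric: r̄_k = r̄_{n−k} for all 0 ≤ k ≤ n. -/
attribute [local instance] Classical.propDecidable

noncomputable section

/-- `α` is a composition: a nonempty list of positive integers. -/
def IsComposition (α : List ℕ) : Prop := α ≠ [] ∧ ∀ p ∈ α, 0 < p

/-- The 0-based index of the segment of the composition `α` containing edge `e`,
where edge `e` joins nodes `e` and `e+1` (nodes are 0-indexed, so node `i`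
is the element `x_{i+1}` of the fence). -/
def segIdx (α : List ℕ) (e : ℕ) : ℕ :=
  ((List.range α.length).filter fun j => decide ((α.take (j + 1)).sum ≤ e)).length

/-- Edge `e` of the fence of `α` points upwards (node `e` ⪯ node `e+1`):
edges in odd (1-based) segments point up, edges in even segments point down. -/
def upEdge (α : List ℕ) (e : ℕ) : Prop := Even (segIdx α e)

/-- The defining relations of the fence poset `F(α)` on `Fin (α.sum + 1)`:
`fenceStep α x y` holds iff `x ⪯ y` is one of the generating (cover) relations. -/
def fenceStep (α : List ℕ) (x y : Fin (α.sum + 1)) : Prop :=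
  (y.val = x.val + 1 ∧ upEdge α x.val) ∨ (x.val = y.val + 1 ∧ ¬ upEdge α y.val)

/-- The order of the fence poset `F(α)`, i.e. the partial order generated by
the defining relations. -/
def fenceLE (α : List ℕ) : Fin (α.sum + 1) → Fin (α.sum + 1) → Prop :=
  Relation.ReflTransGen (fenceStep α)

/-- Lower (order) ideals of the fence poset `F(α)`. -/
def IsFenceIdeal (α : List ℕ) (I : Finset (Fin (α.sum + 1))) : Prop :=
  ∀ x y, fenceLE α x y → y ∈ I → x ∈ I

/-- `fenceRank α k` is the number of lower ideals of `F(α)` of size `k`;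
the rank sequence of `F(α)` is `fenceRank α 0, …, fenceRank α (α.sum + 1)`. -/
def fenceRank (α : List ℕ) (k : ℕ) : ℕ :=
  Nat.card {I : Finset (Fin (α.sum + 1)) // IsFenceIdeal α I ∧ I.card = k}

/-- Defining relations of the circular fence poset `F̄(α)` on `Fin α.sum`:
as for the fence, but node `α.sum` (that is, `x_{n+1}`) is identified with node `0`. -/
def cStep (α : List ℕ) (x y : Fin α.sum) : Prop :=
  (y.val = (x.val + 1) % α.sum ∧ upEdge α x.val) ∨
  (x.val = (y.val + 1) % α.sum ∧ ¬ upEdge α y.val)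

/-- The order of the circular fence poset `F̄(α)`. -/
def cLE (α : List ℕ) : Fin α.sum → Fin α.sum → Prop :=
  Relation.ReflTransGen (cStep α)

/-- Lower (order) ideals of the circular fence poset `F̄(α)`. -/
def IsCIdeal (α : List ℕ) (I : Finset (Fin α.sum)) : Prop :=
  ∀ x y, cLE α x y → y ∈ I → x ∈ I

/-- `cRank α k` is the number of lower ideals of `F̄(α)` of size `k`;
the rank sequence of `F̄(α)` is `cRank α 0, …, cRank α α.sum`. -/
def cRank (α : List ℕ) (k : ℕ) : ℕ :=
  Nat.card {I : Finset (Fin α.sum) // IsCIdeal α I ∧ I.card = k}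

/-- The sequence `a 0, …, a m` is unimodal. -/
def Unimodal (a : ℕ → ℕ) (m : ℕ) : Prop :=
  ∃ j ≤ m, (∀ i < j, a i ≤ a (i + 1)) ∧ ∀ i, j ≤ i → i < m → a (i + 1) ≤ a i

/-- The sequence `a 0, …, a m` is bottom interlacing:
`a m ≤ a 0 ≤ a (m-1) ≤ a 1 ≤ ⋯ ≤ a ⌊m/2⌋`. -/
def BottomInterlacing (a : ℕ → ℕ) (m : ℕ) : Prop :=
  (∀ i, 2 * i ≤ m → a (m - i) ≤ a i) ∧ ∀ i, 2 * i + 1 < m → a i ≤ a (m - 1 - i)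

/-- The sequence `a 0, …, a m` is top interlacing:
`a 0 ≤ a m ≤ a 1 ≤ a (m-1) ≤ ⋯ ≤ a ⌈m/2⌉`. -/
def TopInterlacing (a : ℕ → ℕ) (m : ℕ) : Prop :=
  (∀ i, 2 * i ≤ m → a i ≤ a (m - i)) ∧ ∀ i, 2 * i + 1 < m → a (m - i) ≤ a (i + 1)

/-- The sequence `a 0, …, a m` is symmetric. -/
def SymmetricSeq (a : ℕ → ℕ) (m : ℕ) : Prop := ∀ k ≤ m, a k = a (m - k)

/-- Rowmotion for the order relation `r` on `Fin m`: `rhoRel r I` is the lower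
ideal generated by the minimal elements of the complement of `I`. -/
def rhoRel {m : ℕ} (r : Fin m → Fin m → Prop) (I : Finset (Fin m)) : Finset (Fin m) :=
  Finset.univ.filter fun x => ∃ y, y ∉ I ∧ (∀ z, r z y → z ≠ y → z ∈ I) ∧ r x y

/-- The (forward) orbit of `I` under a rowmotion map `ρ`. -/
def orbitOf {m : ℕ} (ρ : Finset (Fin m) → Finset (Fin m)) (I : Finset (Fin m)) :
    Finset (Finset (Fin m)) :=
  Finset.univ.filter fun J => ∃ k, ρ^[k] I = J

/-- The number of maximal elements of `I` viewed as a subposet of the order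
with relation `r`. -/
def maxCount {m : ℕ} (r : Fin m → Fin m → Prop) (I : Finset (Fin m)) : ℕ :=
  (I.filter fun x => ∀ y ∈ I, r x y → y = x).card

end


/-!
Encode a lower ideal of a circular fence by the membership indicator of its nodes. The
generating polynomial `∑_I X ^ #I` of the ideals is then the trace of a product of `2 × 2`
transfer matrices, one per edge, chosen by the orientation of the edge. A single matrix `S`
with `det S = -(X ^ 2 - X + 1) ≠ 0` conjugates the transfer matrix of an up edge into that of a
down edge and vice versa, so reversing every edge leaves the rank sequence unchanged. But
reversing every edge gives the dual poset, whose ideals are the complements of the original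
ones, so it also reverses the rank sequence.
-/

open Finset Polynomial

theorem SemiconjBy.list_ofFn_prod {M : Type*} [Monoid M] {s : M} {n : ℕ} {f g : Fin n → M}
    (h : ∀ i, SemiconjBy s (f i) (g i)) :
    SemiconjBy s (List.ofFn f).prod (List.ofFn g).prod := by
  induction n with
  | zero => simp [SemiconjBy.one_right]
  | succ n ih => simpa [List.ofFn_succ] using (h 0).mul_right (ih fun i => h i.succ)

theorem Relation.forall_reflTransGen_imp_iff {α : Type*} {r : α → α → Prop} {P : α → Prop} :
    (∀ x y, ReflTransGen r x y → P y → P x) ↔ ∀ x y, r x y → P y → P x := by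
  refine ⟨fun h x y hxy => h x y (.single hxy), fun h x y hxy hy => ?_⟩
  induction hxy using Relation.ReflTransGen.head_induction_on with
  | refl => exact hy
  | head hstep _ ih => exact h _ _ hstep ih

section TransferMatrix

variable {σ R : Type*} [Fintype σ] [DecidableEq σ] [CommSemiring R]

/- A walk `v → x₀ → ⋯ → xₙ = w` is recorded by `g = (x₀, …, xₙ₋₁)`; `Fin.snoc g w` appends
its endpoint. -/
theorem Matrix.mul_list_ofFn_prod_apply {n : ℕ} (B : Matrix σ σ R) (A : Fin n → Matrix σ σ R)
    (v w : σ) :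
    (B * (List.ofFn A).prod) v w =
      ∑ g : Fin n → σ, B v (Fin.snoc (α := fun _ => σ) g w 0) *
        ∏ i, A i (g i) (Fin.snoc (α := fun _ => σ) g w i.succ) := by
  induction n generalizing w with
  | zero => simp [Fin.snoc]
  | succ n ih =>
    rw [List.ofFn_succ', List.prod_concat, ← mul_assoc, Matrix.mul_apply,
      ← (Fin.snocEquiv fun _ => σ).sum_comp, Fintype.sum_prod_type]
    refine sum_congr rfl fun u _ => ?_
    simp only [ih, sum_mul, Fin.prod_univ_castSucc, Fin.snocEquiv_apply, Fin.succ_castSucc,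
      Fin.snoc_castSucc, Fin.succ_last, Fin.snoc_last, Fin.snoc_apply_zero, mul_assoc]

theorem Matrix.trace_list_ofFn_prod {n : ℕ} [NeZero n] (A : Fin n → Matrix σ σ R) :
    (List.ofFn A).prod.trace = ∑ g : Fin n → σ, ∏ i, A i (g i) (g (i + 1)) := by
  obtain ⟨m, rfl⟩ := Nat.exists_eq_add_one_of_ne_zero (NeZero.ne n)
  have snoc_succ (g : Fin (m + 1) → σ) (i : Fin (m + 1)) :
      Fin.snoc (α := fun _ => σ) g (g 0) i.succ = g (i + 1) := by
    induction i using Fin.lastCases with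
    | last => simp
    | cast j => rw [Fin.succ_castSucc, Fin.snoc_castSucc, Fin.coeSucc_eq_succ]
  have closed_walks (w : σ) := Matrix.mul_list_ofFn_prod_apply 1 A w w
  simp only [one_mul, Matrix.one_apply, Fin.snoc_apply_zero, ite_mul, zero_mul] at closed_walks
  simp only [Matrix.trace, Matrix.diag_apply, closed_walks]
  rw [sum_comm]
  simp [snoc_succ]

end TransferMatrix

theorem Matrix.trace_eq_of_mul_eq_mul {σ R : Type*} [Fintype σ] [DecidableEq σ] [CommRing R]
    [NoZeroDivisors R] {S A B : Matrix σ σ R} (hS : S.det ≠ 0) (h : S * A = B * S) :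
    A.trace = B.trace := by
  -- `S` need not be invertible: conjugate by its adjugate instead and cancel `det S`.
  refine mul_left_cancel₀ hS ?_
  calc S.det * A.trace = (S.adjugate * S * A).trace := by
        rw [Matrix.adjugate_mul, Matrix.smul_mul, one_mul, Matrix.trace_smul, smul_eq_mul]
    _ = (S * S.adjugate * B).trace := by
        rw [mul_assoc, h, ← mul_assoc, Matrix.trace_mul_comm, ← mul_assoc]
    _ = S.det * B.trace := by
        rw [Matrix.mul_adjugate, Matrix.smul_mul, one_mul, Matrix.trace_smul, smul_eq_mul]

namespace CircularFence

/-- The ideal condition across an edge whose endpoints have memberships `x` and `y`;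
`up` says that the first endpoint lies below the second. -/
def EdgeClosed (up : Bool) (x y : Prop) : Prop := if up then (y → x) else (x → y)

theorem edgeClosed_not_not (up : Bool) (x y : Prop) :
    EdgeClosed (!up) (¬x) (¬y) ↔ EdgeClosed up x y := by
  cases up <;> simp [EdgeClosed, not_imp_not]

variable {n : ℕ} [NeZero n]

/-- Lower ideals of the circular fence on `Fin n` in which node `i` lies below node `i + 1`
exactly when `p i`. -/
def IsIdeal (p : Fin n → Bool) (I : Finset (Fin n)) : Prop :=
  ∀ i, EdgeClosed (p i) (i ∈ I) (i + 1 ∈ I)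

noncomputable def idealCount (p : Fin n → Bool) (k : ℕ) : ℕ :=
  #{I : Finset (Fin n) | IsIdeal p I ∧ #I = k}

theorem isIdeal_not_compl_iff (p : Fin n → Bool) (I : Finset (Fin n)) :
    IsIdeal (!p ·) Iᶜ ↔ IsIdeal p I := by
  simp only [IsIdeal, mem_compl, edgeClosed_not_not]

theorem idealCount_not_eq_sub (p : Fin n → Bool) {k : ℕ} (hk : k ≤ n) :
    idealCount (!p ·) k = idealCount p (n - k) := by
  have card_compl (I : Finset (Fin n)) : #Iᶜ = n - #I := by
    rw [Finset.card_compl, Fintype.card_fin]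
  refine card_nbij' compl compl ?_ ?_ (fun I _ => compl_compl I) (fun I _ => compl_compl I)
    <;> intro I
    <;> simp only [coe_filter, mem_univ, true_and, Set.mem_ofPred_eq, card_compl]
  · rintro ⟨hI, rfl⟩
    rw [← isIdeal_not_compl_iff, compl_compl]
    exact ⟨hI, by omega⟩
  · rintro ⟨hI, hcard⟩
    have := I.card_le_univ
    rw [Fintype.card_fin] at this
    exact ⟨(isIdeal_not_compl_iff p I).2 hI, by omega⟩

/-- Transfer matrix of an edge, indexed by the memberships of its two endpoints; the weight
`X` records the first endpoint. -/
noncomputable def transferMatrix (up : Bool) : Matrix Bool Bool ℤ[X] :=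
  Matrix.of fun x y => if EdgeClosed up x y then (if x then X else 1) else 0

noncomputable def idealPoly (p : Fin n → Bool) : ℤ[X] :=
  ∑ I : Finset (Fin n), if IsIdeal p I then X ^ #I else 0

theorem coeff_idealPoly (p : Fin n → Bool) (k : ℕ) :
    (idealPoly p).coeff k = idealCount p k := by
  simp only [idealPoly, idealCount, finsetSum_coeff, apply_ite (coeff · k), coeff_X_pow,
    coeff_zero, ← ite_and, sum_boole, eq_comm]

theorem idealPoly_eq_trace (p : Fin n → Bool) :
    idealPoly p = (List.ofFn (transferMatrix ∘ p)).prod.trace := by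
  have memberships : Function.Bijective fun (I : Finset (Fin n)) i => decide (i ∈ I) :=
    ⟨fun I J h => Finset.ext fun i => by simpa using congrFun h i,
      fun g => ⟨({i | g i} : Finset (Fin n)), by ext; simp⟩⟩
  rw [Matrix.trace_list_ofFn_prod, idealPoly, ← Fintype.sum_bijective _ memberships _ _ fun I => rfl]
  refine sum_congr rfl fun I _ => ?_
  simp only [IsIdeal, Function.comp_apply, transferMatrix, Matrix.of_apply, decide_eq_true_eq,
    Fintype.prod_ite_zero, prod_ite_mem, univ_inter, prod_const]
  congr

/-- The solution, unique up to a scalar, of `S * transferMatrix up = transferMatrix (!up) * S`. -/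
noncomputable def intertwiner : Matrix Bool Bool ℤ[X] :=
  Matrix.of fun x y => if x then (if y then X - 1 else X) else (if y then 1 else 1 - X)

theorem intertwiner_mul_transferMatrix (up : Bool) :
    intertwiner * transferMatrix up = transferMatrix (!up) * intertwiner := by
  refine Matrix.ext fun x y => ?_
  cases up <;> cases x <;> cases y <;>
    simp [Matrix.mul_apply, intertwiner, transferMatrix, EdgeClosed] <;> ring

theorem det_intertwiner_ne_zero : intertwiner.det ≠ 0 := by
  rw [← Matrix.det_reindex_self finTwoEquiv.symm, Matrix.det_fin_two]
  intro h
  simpa [intertwiner, finTwoEquiv] using congrArg (eval 0) h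

theorem idealPoly_not (p : Fin n → Bool) : idealPoly (!p ·) = idealPoly p := by
  rw [idealPoly_eq_trace, idealPoly_eq_trace]
  refine (Matrix.trace_eq_of_mul_eq_mul det_intertwiner_ne_zero ?_).symm
  exact SemiconjBy.list_ofFn_prod fun i => intertwiner_mul_transferMatrix (p i)

theorem idealCount_not (p : Fin n → Bool) (k : ℕ) : idealCount (!p ·) k = idealCount p k := by
  simpa only [coeff_idealPoly, Nat.cast_inj] using congrArg (coeff · k) (idealPoly_not p)

theorem idealCount_symm (p : Fin n → Bool) {k : ℕ} (hk : k ≤ n) :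
    idealCount p k = idealCount p (n - k) := by
  rw [← idealCount_not, idealCount_not_eq_sub p hk]

end CircularFence

section CircularFencePoset

variable (α : List ℕ) [NeZero α.sum]

theorem cStep_iff (x y : Fin α.sum) :
    cStep α x y ↔ (y = x + 1 ∧ upEdge α x) ∨ (x = y + 1 ∧ ¬upEdge α y) := by
  simp only [cStep, Fin.ext_iff, Fin.val_add, Fin.val_one', Nat.add_mod_mod]

theorem isCIdeal_iff (I : Finset (Fin α.sum)) :
    IsCIdeal α I ↔ CircularFence.IsIdeal (fun i => decide (upEdge α i)) I := by
  rw [IsCIdeal, cLE, Relation.forall_reflTransGen_imp_iff]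
  simp only [cStep_iff, or_imp, and_imp, forall_and, forall_eq]
  conv_lhs => arg 2; rw [forall_comm]
  simp only [forall_eq, CircularFence.IsIdeal, CircularFence.EdgeClosed, ← forall_and]
  refine forall_congr' fun i => ?_
  by_cases h : upEdge α i <;> simp [h]

theorem cRank_eq_idealCount (k : ℕ) :
    cRank α k = CircularFence.idealCount (fun i : Fin α.sum => decide (upEdge α i)) k := by
  simp [cRank, CircularFence.idealCount, isCIdeal_iff, Nat.card_eq_fintype_card,
    Fintype.card_subtype]

end CircularFencePoset

theorem circular_rank_symmetric_general (α : List ℕ) :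
    ∀ k ≤ α.sum, cRank α k = cRank α (α.sum - k) := by
  intro k hk
  rcases eq_zero_or_neZero α.sum with h0 | _
  · obtain rfl : k = 0 := by omega
    simp [h0]
  · simpa only [cRank_eq_idealCount] using CircularFence.idealCount_symm _ hk

/-- For every composition `α` of `n` with an even number of parts, the
rank sequence of the circular fence poset `F̄(α)` is symmetric. -/
theorem circular_rank_symmetric (α : List ℕ) (hα : IsComposition α)
    (heven : Even α.length) :
    ∀ k ≤ α.sum, cRank α k = cRank α (α.sum - k) :=
  circular_rank_symmetric_general α
end

section
/- Let α=(α_1,…,α_{2s}) be a composition of n with an even number of parts and let β=(α_k,α_{k+1},…,α_{2s},α_1,…,α_{k−1}) be any cyclic shift of α. Then the circular fence posets F̄(α) and F̄(β) have the same rank sequence: for every j, the number of lower ideals of F̄(α) of size j equals the number of lower ideals of F̄(β) of size j. -/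
attribute [local instance] Classical.propDecidable

/-!
Transfer matrices. Encode a lower ideal of `F̄(α)` by its `0/1`-labelling of the cycle. Each edge
gives a `2 × 2` matrix over `ℤ[X]` whose entry at (label of tail, label of head) is
`X ^ (label of head)` when the two labels are compatible with the edge and `0` otherwise, so the
trace of the product of these matrices around the cycle is `∑ j, cRank α j * X ^ j`.

Moving the first part of `α` to the end rotates the word of edge directions and, since the
number of parts is even, reverses every edge. Rotation preserves the trace by cyclicity.
Reversing every edge preserves it too: the symmetric matrix `T = !![1 - X, X; X, (X - 1) * X]`
satisfies `Mᵀ * T = T * M` for both edge matrices, so reading the word backwards does not change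
the trace, and `S = !![1, 0; 0, X]` satisfies `Mᵀ * S = S * M'` with `M'` the matrix of the
opposite edge, so neither does reading it backwards with every edge reversed.
-/

open Polynomial Matrix

namespace Matrix

variable {ι R : Type*} [Fintype ι] [DecidableEq ι]

theorem list_ofFn_prod_apply [CommSemiring R] {n : ℕ} (M : Fin n → Matrix ι ι R) (a b : ι) :
    (List.ofFn M).prod a b =
      ∑ f : Fin (n + 1) → ι,
        if f 0 = a ∧ f (Fin.last n) = b then ∏ i, M i (f i.castSucc) (f i.succ) else 0 := by
  induction n generalizing a with
  | zero =>
    rw [← (Equiv.funUnique (Fin 1) ι).symm.sum_comp]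
    simp [ite_and, Matrix.one_apply]
  | succ n ih =>
    rw [List.ofFn_succ, List.prod_cons, mul_apply,
      ← (Fin.consEquiv fun _ => ι).sum_comp, Fintype.sum_prod_type]
    simp only [ih, Finset.mul_sum]
    rw [Finset.sum_comm]
    simp [Fin.consEquiv, ite_and, Fin.prod_univ_succ, ← Fin.succ_last]

theorem trace_list_ofFn_prod_s5 [CommSemiring R] {n : ℕ} [NeZero n] (M : Fin n → Matrix ι ι R) :
    (List.ofFn M).prod.trace = ∑ f : Fin n → ι, ∏ i, M i (f i) (f (i + 1)) := by
  obtain ⟨m, rfl⟩ := Nat.exists_eq_add_one_of_ne_zero (NeZero.ne n)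
  have snoc_succ (f : Fin (m + 1) → ι) (i : Fin (m + 1)) :
      Fin.snoc (α := fun _ => ι) f (f 0) i.succ = f (i + 1) := by
    induction i using Fin.lastCases with
    | last => simp
    | cast j => rw [Fin.succ_castSucc, Fin.snoc_castSucc, Fin.coeSucc_eq_succ]
  simp only [trace, diag_apply, list_ofFn_prod_apply]
  rw [Finset.sum_comm, ← (Fin.snocEquiv fun _ => ι).sum_comp, Fintype.sum_prod_type,
    Finset.sum_comm]
  simp [Fin.snocEquiv, ite_and, snoc_succ]

theorem semiconjBy_list_prod_transpose [CommSemiring R] {α : Type*} {W : Matrix ι ι R}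
    {f g : α → Matrix ι ι R} (h : ∀ p, SemiconjBy W (g p) (f p)ᵀ) :
    ∀ l : List α, SemiconjBy W (l.reverse.map g).prod (l.map f).prodᵀ
  | [] => by simp
  | p :: l => by
    simpa [transpose_mul] using (semiconjBy_list_prod_transpose h l).mul_right (h p)

theorem trace_eq_of_semiconjBy_transpose [CommRing R] [IsDomain R] {W A B : Matrix ι ι R}
    (hW : W.det ≠ 0) (h : SemiconjBy W B Aᵀ) : B.trace = A.trace := by
  refine mul_left_cancel₀ hW ?_
  calc W.det * B.trace = (W.adjugate * (W * B)).trace := by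
        rw [← mul_assoc, adjugate_mul, smul_mul, one_mul, trace_smul, smul_eq_mul]
    _ = (Aᵀ * (W * W.adjugate)).trace := by rw [h.eq, trace_mul_comm, mul_assoc]
    _ = W.det * A.trace := by
        rw [mul_adjugate, Matrix.mul_smul, mul_one, trace_smul, trace_transpose, smul_eq_mul]

theorem transpose_fin_two {α : Type*} (a b c d : α) : !![a, b; c, d]ᵀ = !![a, c; b, d] :=
  (transposeᵣ_eq _).symm

end Matrix

theorem Polynomial.coeff_sum_ite_X_pow {R β : Type*} [Semiring R] (s : Finset β) (P : β → Prop)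
    [DecidablePred P] (f : β → ℕ) (j : ℕ) :
    (∑ b ∈ s, if P b then (X : R[X]) ^ f b else 0).coeff j =
      ((s.filter fun b => P b ∧ f b = j).card : R) := by
  rw [finsetSum_coeff, Finset.card_filter, Nat.cast_sum]
  refine Finset.sum_congr rfl fun b _ => ?_
  by_cases hb : P b <;> simp [hb, coeff_X_pow, eq_comm]

def Finset.equivIndicator (α : Type*) [Fintype α] [DecidableEq α] :
    Finset α ≃ (α → Fin 2) where
  toFun I i := if i ∈ I then 1 else 0
  invFun f := {i | f i = 1}
  left_inv I := by ext; simp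
  right_inv f := by
    funext i
    rcases Fin.exists_fin_two.mp ⟨f i, rfl⟩ with h | h <;> simp [h]

/-- Transfer matrix of an edge `x ⪯ y` (if `p`) or `x ⪰ y` (if `¬p`); index `1` means "in the
ideal", and the entry at `(x, y)` is `X ^ y`, or `0` if those labels violate the edge. -/
noncomputable def edgeMatrix (p : Prop) : Matrix (Fin 2) (Fin 2) ℤ[X] :=
  if p then !![1, 0; 1, X] else !![1, X; 0, X]

theorem semiconjBy_edgeMatrix_transpose (p : Prop) :
    SemiconjBy !![1 - X, X; X, (X - 1) * X] (edgeMatrix p) (edgeMatrix p)ᵀ := by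
  unfold SemiconjBy edgeMatrix
  split_ifs <;> rw [transpose_fin_two, mul_fin_two, mul_fin_two] <;>
    congrm !![?_, ?_; ?_, ?_] <;> ring

theorem semiconjBy_edgeMatrix_not_transpose (p : Prop) :
    SemiconjBy !![1, 0; 0, X] (edgeMatrix ¬p) (edgeMatrix p)ᵀ := by
  by_cases hp : p <;>
    simp only [SemiconjBy, edgeMatrix, hp, not_true_eq_false, not_false_eq_true, if_true,
      if_false, transpose_fin_two, mul_fin_two] <;>
    congrm !![?_, ?_; ?_, ?_] <;> ring

noncomputable def cycleTrace (w : List Prop) : ℤ[X] := (w.map edgeMatrix).prod.trace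

theorem cycleTrace_rotate (w : List Prop) (k : ℕ) : cycleTrace (w.rotate k) = cycleTrace w := by
  rw [List.rotate_eq_drop_append_take_mod, cycleTrace, List.map_append, List.prod_append,
    trace_mul_comm, ← List.prod_append, ← List.map_append, List.take_append_drop, cycleTrace]

theorem cycleTrace_reverse (w : List Prop) : cycleTrace w.reverse = cycleTrace w := by
  refine trace_eq_of_semiconjBy_transpose (fun h => ?_)
    (semiconjBy_list_prod_transpose semiconjBy_edgeMatrix_transpose w)
  simpa [det_fin_two_of] using congrArg (eval 2) h

theorem cycleTrace_reverse_map_not (w : List Prop) :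
    cycleTrace (w.reverse.map Not) = cycleTrace w := by
  rw [cycleTrace, List.map_map]
  exact trace_eq_of_semiconjBy_transpose (by simp [det_fin_two_of])
    (semiconjBy_list_prod_transpose semiconjBy_edgeMatrix_not_transpose w)

theorem cycleTrace_map_not (w : List Prop) : cycleTrace (w.map Not) = cycleTrace w := by
  rw [← cycleTrace_reverse, ← List.map_reverse, cycleTrace_reverse_map_not]

def IsCircularIdeal {n : ℕ} [NeZero n] (d : Fin n → Prop) (I : Finset (Fin n)) : Prop :=
  ∀ e, (d e → e + 1 ∈ I → e ∈ I) ∧ (¬d e → e ∈ I → e + 1 ∈ I)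

theorem edgeMatrix_apply_ite (p a b : Prop) [Decidable a] [Decidable b] :
    edgeMatrix p (if a then 1 else 0) (if b then 1 else 0) =
      if (p → b → a) ∧ (¬p → a → b) then (if b then X else 1) else 0 := by
  by_cases p <;> by_cases a <;> by_cases b <;> simp_all [edgeMatrix]

theorem cycleTrace_ofFn {n : ℕ} [NeZero n] (d : Fin n → Prop) :
    cycleTrace (List.ofFn d) =
      ∑ I : Finset (Fin n), if IsCircularIdeal d I then X ^ I.card else 0 := by
  rw [cycleTrace, List.map_ofFn, trace_list_ofFn_prod_s5, ← (Finset.equivIndicator _).sum_comp]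
  refine Finset.sum_congr rfl fun I _ => ?_
  simp only [Finset.equivIndicator, Equiv.coe_fn_mk, Function.comp_apply, edgeMatrix_apply_ite,
    Fintype.prod_ite_zero]
  congr 1
  rw [Fintype.prod_equiv (Equiv.addRight 1) (fun e => if e + 1 ∈ I then X else 1)
      (fun e => if e ∈ I then X else 1) fun _ => rfl,
    Fintype.prod_ite_mem, Finset.prod_const]

theorem isCIdeal_iff_isCircularIdeal {γ : List ℕ} [NeZero γ.sum] {I : Finset (Fin γ.sum)} :
    IsCIdeal γ I ↔ IsCircularIdeal (fun e => upEdge γ e) I := by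
  have val_add_one (z : Fin γ.sum) : ((z + 1 : Fin γ.sum) : ℕ) = (z + 1) % γ.sum := by
    rw [Fin.val_add, Fin.val_one', Nat.add_mod_mod]
  have cStep_iff (x y : Fin γ.sum) :
      cStep γ x y ↔ (y = x + 1 ∧ upEdge γ x) ∨ (x = y + 1 ∧ ¬upEdge γ y) := by
    simp only [cStep, Fin.ext_iff, val_add_one]
  have step_closed : IsCIdeal γ I ↔ ∀ x y, cStep γ x y → y ∈ I → x ∈ I := by
    refine ⟨fun h x y hxy => h x y (.single hxy), fun h x y hxy => ?_⟩
    induction hxy with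
    | refl => exact id
    | tail _ hyz ih => exact ih ∘ h _ _ hyz
  simp only [step_closed, cStep_iff]
  constructor
  · exact fun h e =>
      ⟨fun hu => h e (e + 1) (.inl ⟨rfl, hu⟩), fun hu => h (e + 1) e (.inr ⟨rfl, hu⟩)⟩
  · rintro h x y (⟨rfl, hu⟩ | ⟨rfl, hu⟩)
    exacts [(h x).1 hu, (h y).2 hu]

theorem segIdx_cons (h : ℕ) (t : List ℕ) (e : ℕ) :
    segIdx (h :: t) e = if h ≤ e then segIdx t (e - h) + 1 else 0 := by
  unfold segIdx
  rw [List.length_cons, List.range_succ_eq_map, List.filter_cons, List.filter_map]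
  simp only [zero_add, List.take_succ_cons, List.take_zero, List.sum_cons, List.sum_nil, add_zero,
    decide_eq_true_eq, Function.comp_def, Nat.succ_eq_add_one]
  split_ifs with he
  · rw [List.length_cons, List.length_map]
    congr 2
    exact List.filter_congr fun j _ => decide_eq_decide.mpr (by omega)
  · rw [List.length_map, List.length_eq_zero_iff, List.filter_eq_nil_iff]
    exact fun j _ hj => absurd (of_decide_eq_true hj) (by omega)

theorem segIdx_append_singleton {h e : ℕ} {t : List ℕ} (he : e < t.sum + h) :
    segIdx (t ++ [h]) e = segIdx t e := by
  unfold segIdx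
  rw [List.length_append, List.length_singleton, List.range_succ, List.filter_append]
  have last_out : ¬((t ++ [h]).take (t.length + 1)).sum ≤ e := by simp; omega
  rw [List.filter_singleton, decide_eq_false last_out, cond_false, List.append_nil]
  congr 1
  refine List.filter_congr fun j hj => ?_
  rw [List.take_append_of_le_length (List.mem_range.mp hj)]

theorem segIdx_of_sum_le {t : List ℕ} {e : ℕ} (he : t.sum ≤ e) : segIdx t e = t.length := by
  unfold segIdx
  rw [List.filter_eq_self.mpr, List.length_range]
  intro j _
  have := List.sum_take_add_sum_drop t (j + 1)
  exact decide_eq_true (by omega)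

/-- Moving the first part `h` to the end shifts every edge by `h` and changes the parity of the
index of every segment; for the moved part this is because `t` has an odd number of parts. -/
theorem upEdge_append_singleton_iff {h e : ℕ} {t : List ℕ} (heven : Even (h :: t).length)
    (he : e < (h :: t).sum) :
    upEdge (t ++ [h]) e ↔ ¬upEdge (h :: t) ((e + h) % (h :: t).sum) := by
  rw [List.sum_cons] at he ⊢
  unfold upEdge
  rw [segIdx_append_singleton (by omega)]
  rcases lt_or_ge e t.sum with he' | he'
  · rw [Nat.mod_eq_of_lt (by omega), segIdx_cons, if_pos (by omega), Nat.add_sub_cancel,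
      Nat.even_add_one, not_not]
  · rw [Nat.mod_eq_sub_mod (by omega), Nat.mod_eq_of_lt (by omega), segIdx_cons,
      if_neg (by omega), segIdx_of_sum_le he']
    rw [List.length_cons, Nat.even_add_one] at heven
    simp [heven]

def circularWord (γ : List ℕ) : List Prop := List.ofFn fun e : Fin γ.sum => upEdge γ e

theorem circularWord_rotate_one {h : ℕ} {t : List ℕ} (heven : Even (h :: t).length) :
    circularWord ((h :: t).rotate 1) = ((circularWord (h :: t)).rotate h).map Not := by
  rw [List.rotate_cons_succ, List.rotate_zero]
  refine List.ext_getElem (by simp [circularWord, add_comm]) fun e he _ => ?_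
  simp only [circularWord, List.getElem_ofFn, List.getElem_map, List.getElem_rotate,
    List.length_ofFn]
  exact propext (upEdge_append_singleton_iff heven (by simpa [circularWord, add_comm] using he))

theorem cRank_eq_coeff_cycleTrace {γ : List ℕ} (hγ : 0 < γ.sum) (j : ℕ) :
    (cRank γ j : ℤ) = (cycleTrace (circularWord γ)).coeff j := by
  have : NeZero γ.sum := ⟨hγ.ne'⟩
  rw [circularWord, cycleTrace_ofFn, coeff_sum_ite_X_pow, cRank.eq_1, Nat.card_eq_fintype_card,
    Fintype.card_subtype]
  simp_rw [isCIdeal_iff_isCircularIdeal]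

theorem cRank_rotate_one {α : List ℕ} (hα : 0 < α.sum) (heven : Even α.length) (j : ℕ) :
    cRank (α.rotate 1) j = cRank α j := by
  obtain ⟨h, t, rfl⟩ : ∃ h t, α = h :: t :=
    List.exists_cons_of_ne_nil (by rintro rfl; simp at hα)
  have hrot : 0 < ((h :: t).rotate 1).sum := by rwa [(List.rotate_perm _ 1).sum_eq]
  have := cRank_eq_coeff_cycleTrace hrot j
  rw [circularWord_rotate_one heven, cycleTrace_map_not, cycleTrace_rotate,
    ← cRank_eq_coeff_cycleTrace hα] at this
  exact_mod_cast this

theorem IsComposition.sum_pos {α : List ℕ} (hα : IsComposition α) : 0 < α.sum := by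
  obtain ⟨h, t, rfl⟩ := List.exists_cons_of_ne_nil hα.1
  have := hα.2 h List.mem_cons_self
  rw [List.sum_cons]
  omega

/-- The rank sequence of a circular fence poset is invariant under
cyclic shifts of the composition (`α.rotate k = α.drop k ++ α.take k`). -/
theorem circular_rank_rotate (α : List ℕ) (hα : IsComposition α)
    (heven : Even α.length) (k : ℕ) :
    ∀ j, cRank α j = cRank (α.rotate k) j := by
  intro j
  induction k with
  | zero => rw [List.rotate_zero]
  | succ k ih =>
    have hpos : 0 < (α.rotate k).sum := by
      rw [(List.rotate_perm α k).sum_eq]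
      exact hα.sum_pos
    rw [ih, ← List.rotate_rotate, cRank_rotate_one hpos (by rwa [List.length_rotate])]
end

section
/- Let β=(β_1,…,β_{2s}) be a composition of n−1 with an even number of parts, and consider the fence poset F(β) on x_1,…,x_n. For each k, let f_k be the number of lower ideals of F(β) of size k that contain x_1 but not x_n, and let g_k be the number of lower ideals of size k that contain x_n but not x_1. Then the sequence (f_k − g_k)_{0 ≤ k ≤ n} is symmetric with center n/2: f_k − g_k = f_{n−k} − g_{n−k} for all k. -/
attribute [local instance] Classical.propDecidable

/-- Number of size-`k` lower ideals of `F(β)` that contain the leftmost node `x₁`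
but not the rightmost node. -/
noncomputable def leftCount (β : List ℕ) (k : ℕ) : ℕ :=
  Nat.card {I : Finset (Fin (β.sum + 1)) //
    IsFenceIdeal β I ∧ I.card = k ∧ (0 : Fin (β.sum + 1)) ∈ I ∧ Fin.last β.sum ∉ I}

/-- Number of size-`k` lower ideals of `F(β)` that contain the rightmost node
but not the leftmost node `x₁`. -/
noncomputable def rightCount (β : List ℕ) (k : ℕ) : ℕ :=
  Nat.card {I : Finset (Fin (β.sum + 1)) //
    IsFenceIdeal β I ∧ I.card = k ∧ Fin.last β.sum ∈ I ∧ (0 : Fin (β.sum + 1)) ∉ I}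

namespace FenceAux
open Polynomial
noncomputable section


/-- 2x2 matrix of integer polynomials, entries indexed (row=source value a, col=target b). -/
structure M2 where
  ff : ℤ[X]
  ft : ℤ[X]
  tf : ℤ[X]
  tt : ℤ[X]

namespace M2
def mul (A B : M2) : M2 :=
  ⟨A.ff*B.ff + A.ft*B.tf, A.ff*B.ft + A.ft*B.tt, A.tf*B.ff + A.tt*B.tf, A.tf*B.ft + A.tt*B.tt⟩
def tr (A : M2) : M2 := ⟨A.ff, A.tf, A.ft, A.tt⟩
def one : M2 := ⟨1,0,0,1⟩

theorem mul_assoc (A B C : M2) : mul (mul A B) C = mul A (mul B C) := by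
  simp only [mul]; congr 1 <;> ring

theorem tr_mul (A B : M2) : tr (mul A B) = mul (tr B) (tr A) := by
  simp only [mul, tr]; congr 1 <;> ring
end M2

/-- the "edge constraint": letter c=true allows ascents, c=false allows descents. -/
def ed (c a b : Bool) : Prop := if c then (a = true → b = true) else (b = true → a = true)

def wq (b : Bool) : ℤ[X] := if b then X else 1
def MqE (c a b : Bool) : ℤ[X] := if ed c a b then wq b else 0
def Mq (c : Bool) : M2 := ⟨MqE c false false, MqE c false true, MqE c true false, MqE c true true⟩

def Em : M2 := ⟨X, 0, 0, 1⟩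
def Wm : M2 := ⟨X - X^2, X, X, X - 1⟩

theorem Mq_false : Mq false = ⟨1, 0, 1, X⟩ := by
  simp [Mq, MqE, ed, wq]
theorem Mq_true : Mq true = ⟨1, X, 0, X⟩ := by
  simp [Mq, MqE, ed, wq]

theorem ME (c : Bool) : M2.mul (Mq !c) Em = M2.mul Em (M2.tr (Mq c)) := by
  cases c <;> simp only [Bool.not_true, Bool.not_false, Mq_false, Mq_true, M2.mul, M2.tr, Em] <;>
    congr 1 <;> ring

theorem MW (c : Bool) : M2.mul (Mq c) Wm = M2.mul Wm (M2.tr (Mq c)) := by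
  cases c <;> simp only [Mq_false, Mq_true, M2.mul, M2.tr, Wm] <;> congr 1 <;> ring

/-- forward product -/
def PmN : ℕ → (ℕ → Bool) → M2
  | 0, _ => M2.one
  | (N+1), p => M2.mul (Mq (p 0)) (PmN N (fun i => p (i+1)))

/-- reversed product -/
def RmN : ℕ → (ℕ → Bool) → M2
  | 0, _ => M2.one
  | (N+1), p => M2.mul (RmN N (fun i => p (i+1))) (Mq (p 0))

theorem PE : ∀ (N : ℕ) (p : ℕ → Bool),
    M2.mul (PmN N (fun i => !(p i))) Em = M2.mul Em (M2.tr (RmN N p))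
  | 0, p => by simp [PmN, RmN, M2.mul, M2.tr, M2.one, Em]
  | (N+1), p => by
    have ih := PE N (fun i => p (i+1))
    simp only [PmN, RmN, M2.tr_mul]
    rw [M2.mul_assoc, ih, ← M2.mul_assoc, ME, M2.mul_assoc]

theorem RW : ∀ (N : ℕ) (p : ℕ → Bool),
    M2.mul (RmN N p) Wm = M2.mul Wm (M2.tr (PmN N p))
  | 0, p => by simp [PmN, RmN, M2.mul, M2.tr, M2.one, Wm]
  | (N+1), p => by
    have ih := RW N (fun i => p (i+1))
    simp only [PmN, RmN, M2.tr_mul]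
    rw [M2.mul_assoc, MW, ← M2.mul_assoc, ih, M2.mul_assoc]

theorem cpoly_ne : (X^2 - X + 1 : ℤ[X]) ≠ 0 := by
  intro h
  have := congrArg (Polynomial.eval 0) h
  simp at this

/-- the key algebraic identity -/
theorem phi_key (N : ℕ) (p : ℕ → Bool) :
    X * (PmN N p).tf + X * (PmN N (fun i => !(p i))).tf
      = (PmN N p).ft + (PmN N (fun i => !(p i))).ft := by
  set P := PmN N p
  set P' := PmN N (fun i => !(p i))
  set R := RmN N p
  have hPE := PE N p
  have hRW := RW N p
  -- entries from PE
  have e1 : P'.tf * X = R.ft := by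
    have := congrArg M2.tf hPE
    simpa [M2.mul, M2.tr, Em, P', R] using this
  have e2 : P'.ft = X * R.tf := by
    have := congrArg M2.ft hPE
    simpa [M2.mul, M2.tr, Em, P', R] using this
  -- entries from RW
  have h1 : R.ff*(X - X^2) + R.ft*X = (X - X^2)*P.ff + X*P.ft := by
    have := congrArg M2.ff hRW; simpa [M2.mul, M2.tr, Wm, P, R] using this
  have h2 : R.ff*X + R.ft*(X-1) = (X - X^2)*P.tf + X*P.tt := by
    have := congrArg M2.ft hRW; simpa [M2.mul, M2.tr, Wm, P, R] using this
  have h3 : R.tf*(X - X^2) + R.tt*X = X*P.ff + (X-1)*P.ft := by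
    have := congrArg M2.tf hRW; simpa [M2.mul, M2.tr, Wm, P, R] using this
  have h4 : R.tf*X + R.tt*(X-1) = X*P.tf + (X-1)*P.tt := by
    have := congrArg M2.tt hRW; simpa [M2.mul, M2.tr, Wm, P, R] using this
  have key : (X^2 - X + 1) * (X*P.tf - P.ft) = (X^2-X+1) * (X*R.tf - R.ft) := by
    linear_combination h1 + (X-1)*h2 + (X-1)*h3 - X*h4
  have key2 : X*P.tf - P.ft = X*R.tf - R.ft := mul_left_cancel₀ cpoly_ne key
  linear_combination key2 + e1 - e2



/-- the word condition: at each edge e, the letter p e constrains adjacent values. -/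
def wcN (N : ℕ) (p : ℕ → Bool) (w : Fin (N+1) → Bool) : Prop :=
  ∀ e : Fin N, ed (p e.val) (w e.castSucc) (w e.succ)

def wt {N : ℕ} (w : Fin (N+1) → Bool) : ℕ := ∑ x : Fin N, (if w x.succ then 1 else 0)

def total {N : ℕ} (w : Fin (N+1) → Bool) : ℕ := ∑ x : Fin (N+1), (if w x then 1 else 0)

theorem total_eq {N : ℕ} (w : Fin (N+1) → Bool) :
    total w = (if w 0 then 1 else 0) + wt w := Fin.sum_univ_succ _

theorem total_le {N : ℕ} (w : Fin (N+1) → Bool) : total w ≤ N + 1 := by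
  calc total w ≤ ∑ _x : Fin (N+1), 1 := Finset.sum_le_sum (fun i _ => by split <;> omega)
  _ = N + 1 := by simp

def cnt (N : ℕ) (p : ℕ → Bool) (a b : Bool) (k : ℕ) : ℕ :=
  Nat.card {w : Fin (N+1) → Bool // wcN N p w ∧ w 0 = a ∧ w (Fin.last N) = b ∧ wt w = k}

theorem wcN_cons {N : ℕ} (p : ℕ → Bool) (a : Bool) (w' : Fin (N+1) → Bool) :
    wcN (N+1) p (Fin.cons a w') ↔
      ed (p 0) a (w' 0) ∧ wcN N (fun i => p (i+1)) w' := by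
  constructor
  · intro h
    refine ⟨?_, fun e => ?_⟩
    · have := h 0
      simpa using this
    · have := h e.succ
      rw [← Fin.succ_castSucc] at this
      simpa [Fin.cons_succ] using this
  · rintro ⟨h0, h1⟩ e
    refine Fin.cases ?_ (fun j => ?_) e
    · simpa using h0
    · have := h1 j
      rw [← Fin.succ_castSucc]
      simpa [Fin.cons_succ] using this

theorem wt_cons {N : ℕ} (a : Bool) (w' : Fin (N+1) → Bool) :
    wt (Fin.cons a w') = total w' := by
  unfold wt total
  apply Finset.sum_congr rfl
  intro x _
  rw [Fin.cons_succ]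

/-- split the count of words over the first value. -/
def consSplitEquiv (N : ℕ) (P : (Fin (N+1+1) → Bool) → Prop) :
    {w : Fin (N+1+1) → Bool // P w} ≃
      ({w' : Fin (N+1) → Bool // P (Fin.cons true w')} ⊕
       {w' : Fin (N+1) → Bool // P (Fin.cons false w')}) where
  toFun w :=
    if h : w.1 0 = true then
      Sum.inl ⟨Fin.tail w.1, by rw [← h, Fin.cons_self_tail]; exact w.2⟩
    else
      Sum.inr ⟨Fin.tail w.1, by
        have h' : w.1 0 = false := by simpa using h
        rw [← h', Fin.cons_self_tail]; exact w.2⟩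
  invFun s :=
    match s with
    | Sum.inl w' => ⟨Fin.cons true w'.1, w'.2⟩
    | Sum.inr w' => ⟨Fin.cons false w'.1, w'.2⟩
  left_inv := by
    rintro ⟨w, hw⟩
    by_cases h : w 0 = true
    · simp only [dif_pos h]
      apply Subtype.ext
      dsimp only
      rw [← h, Fin.cons_self_tail]
    · simp only [dif_neg h]
      have h' : w 0 = false := by simpa using h
      apply Subtype.ext
      dsimp only
      rw [← h', Fin.cons_self_tail]
  right_inv := by
    rintro (⟨w', hw'⟩ | ⟨w', hw'⟩)
    · have h : (Fin.cons true w' : Fin (N+1+1) → Bool) 0 = true := Fin.cons_zero _ _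
      simp only [dif_pos h]
      congr 1
    · have h : ¬ ((Fin.cons false w' : Fin (N+1+1) → Bool) 0 = true) := by
        simp
      simp only [dif_neg h]
      congr 1

theorem card_cons_split (N : ℕ) (P : (Fin (N+1+1) → Bool) → Prop) :
    Nat.card {w : Fin (N+1+1) → Bool // P w} =
      Nat.card {w' : Fin (N+1) → Bool // P (Fin.cons true w')} +
      Nat.card {w' : Fin (N+1) → Bool // P (Fin.cons false w')} := by
  rw [← Nat.card_sum]
  exact Nat.card_congr (consSplitEquiv N P)

/-- split a subtype count by an auxiliary predicate. -/
theorem card_split {α : Type*} [Fintype α] (Q R : α → Prop) :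
    Nat.card {x : α // Q x} =
      Nat.card {x : α // Q x ∧ R x} + Nat.card {x : α // Q x ∧ ¬ R x} := by
  classical
  rw [Nat.card_eq_fintype_card, Nat.card_eq_fintype_card, Nat.card_eq_fintype_card]
  rw [Fintype.card_subtype, Fintype.card_subtype, Fintype.card_subtype]
  rw [show (Finset.univ.filter fun x => Q x ∧ R x) =
      (Finset.univ.filter fun x => Q x).filter R by
    ext x; simp only [Finset.mem_filter, Finset.mem_univ, true_and]]
  rw [show (Finset.univ.filter fun x => Q x ∧ ¬ R x) =
      (Finset.univ.filter fun x => Q x).filter (fun x => ¬ R x) by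
    ext x; simp only [Finset.mem_filter, Finset.mem_univ, true_and]]
  exact (Finset.card_filter_add_card_filter_not (s := Finset.univ.filter fun x => Q x) R).symm

theorem card_empty_subtype {α : Type*} (Q : α → Prop) (h : ∀ x, ¬ Q x) :
    Nat.card {x : α // Q x} = 0 :=
  @Nat.card_of_isEmpty _ ⟨fun x => h x.1 x.2⟩



def ent (A : M2) (a b : Bool) : ℤ[X] :=
  match a, b with
  | false, false => A.ff
  | false, true => A.ft
  | true, false => A.tf
  | true, true => A.tt

theorem ent_mul (A B : M2) (a b : Bool) :
    ent (M2.mul A B) a b = ent A a false * ent B false b + ent A a true * ent B true b := by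
  cases a <;> cases b <;> rfl

theorem ent_Mq (c a b : Bool) : ent (Mq c) a b = MqE c a b := by
  cases a <;> cases b <;> rfl

theorem ent_one (a b : Bool) : ent M2.one a b = if a = b then 1 else 0 := by
  cases a <;> cases b <;> simp [ent, M2.one]

def cntTot (N : ℕ) (p : ℕ → Bool) (a b : Bool) (k : ℕ) : ℕ :=
  Nat.card {w : Fin (N+1) → Bool //
    wcN N p w ∧ w 0 = a ∧ w (Fin.last N) = b ∧ total w = k}

theorem cntTot_false (N : ℕ) (p : ℕ → Bool) (b : Bool) (k : ℕ) :
    cntTot N p false b k = cnt N p false b k := by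
  unfold cntTot cnt
  apply Nat.card_congr
  apply Equiv.subtypeEquivRight
  intro w
  constructor
  · rintro ⟨h1, h2, h3, h4⟩
    refine ⟨h1, h2, h3, ?_⟩
    rw [total_eq, h2] at h4
    simpa using h4
  · rintro ⟨h1, h2, h3, h4⟩
    refine ⟨h1, h2, h3, ?_⟩
    rw [total_eq, h2]
    simpa using h4

theorem cntTot_true_zero (N : ℕ) (p : ℕ → Bool) (b : Bool) :
    cntTot N p true b 0 = 0 := by
  unfold cntTot
  apply card_empty_subtype
  rintro w ⟨-, h2, -, h4⟩
  rw [total_eq, h2] at h4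
  simp at h4

theorem cntTot_true_succ (N : ℕ) (p : ℕ → Bool) (b : Bool) (k : ℕ) :
    cntTot N p true b (k+1) = cnt N p true b k := by
  unfold cntTot cnt
  apply Nat.card_congr
  apply Equiv.subtypeEquivRight
  intro w
  constructor
  · rintro ⟨h1, h2, h3, h4⟩
    refine ⟨h1, h2, h3, ?_⟩
    rw [total_eq, h2] at h4
    simp at h4
    omega
  · rintro ⟨h1, h2, h3, h4⟩
    refine ⟨h1, h2, h3, ?_⟩
    rw [total_eq, h2, h4]
    simp
    omega

theorem cnt_succ (N : ℕ) (p : ℕ → Bool) (a b : Bool) (k : ℕ) :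
    cnt (N+1) p a b k =
      (if ed (p 0) a false then cntTot N (fun i => p (i+1)) false b k else 0) +
      (if ed (p 0) a true then cntTot N (fun i => p (i+1)) true b k else 0) := by
  unfold cnt
  rw [card_cons_split]
  -- rewrite each of the two cons-terms
  have hlast : (Fin.last (N+1)) = (Fin.last N).succ := (Fin.succ_last N).symm
  have key : ∀ t : Bool,
      Nat.card {w' : Fin (N+1) → Bool //
        wcN (N+1) p (Fin.cons t w') ∧ (Fin.cons t w' : Fin (N+1+1) → Bool) 0 = a ∧
        (Fin.cons t w' : Fin (N+1+1) → Bool) (Fin.last (N+1)) = b ∧ wt (Fin.cons t w') = k} =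
      if t = a then
        ((if ed (p 0) a true then cntTot N (fun i => p (i+1)) true b k else 0) +
         (if ed (p 0) a false then cntTot N (fun i => p (i+1)) false b k else 0)) else 0 := by
    intro t
    by_cases hta : t = a
    · subst hta
      rw [if_pos rfl]
      have hiff : ∀ w' : Fin (N+1) → Bool,
          (wcN (N+1) p (Fin.cons t w') ∧ (Fin.cons t w' : Fin (N+1+1) → Bool) 0 = t ∧
            (Fin.cons t w' : Fin (N+1+1) → Bool) (Fin.last (N+1)) = b ∧ wt (Fin.cons t w') = k) ↔
          (ed (p 0) t (w' 0) ∧ wcN N (fun i => p (i+1)) w' ∧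
            w' (Fin.last N) = b ∧ total w' = k) := by
        intro w'
        rw [wcN_cons, wt_cons, hlast, Fin.cons_succ, Fin.cons_zero]
        tauto
      rw [Nat.card_congr (Equiv.subtypeEquivRight hiff)]
      rw [card_split _ (fun w' => w' 0 = true)]
      congr 1
      · by_cases hed : ed (p 0) t true
        · rw [if_pos hed]
          unfold cntTot
          apply Nat.card_congr
          apply Equiv.subtypeEquivRight
          intro w'
          constructor
          · rintro ⟨⟨-, h2, h3, h4⟩, h5⟩
            exact ⟨h2, h5, h3, h4⟩
          · rintro ⟨h2, h5, h3, h4⟩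
            exact ⟨⟨by rw [h5]; exact hed, h2, h3, h4⟩, h5⟩
        · rw [if_neg hed]
          apply card_empty_subtype
          rintro w' ⟨⟨h1, -, -, -⟩, h5⟩
          rw [h5] at h1
          exact hed h1
      · by_cases hed : ed (p 0) t false
        · rw [if_pos hed]
          unfold cntTot
          apply Nat.card_congr
          apply Equiv.subtypeEquivRight
          intro w'
          constructor
          · rintro ⟨⟨-, h2, h3, h4⟩, h5⟩
            have h5' : w' 0 = false := by simpa using h5
            exact ⟨h2, h5', h3, h4⟩
          · rintro ⟨h2, h5, h3, h4⟩
            refine ⟨⟨by rw [h5]; exact hed, h2, h3, h4⟩, by simp [h5]⟩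
        · rw [if_neg hed]
          apply card_empty_subtype
          rintro w' ⟨⟨h1, -, -, -⟩, h5⟩
          have h5' : w' 0 = false := by simpa using h5
          rw [h5'] at h1
          exact hed h1
    · rw [if_neg hta]
      apply card_empty_subtype
      rintro w' ⟨-, h2, -, -⟩
      rw [Fin.cons_zero] at h2
      exact hta h2
  rw [key true, key false]
  cases a <;> simp [add_comm]


theorem cnt_zero (p : ℕ → Bool) (a b : Bool) (k : ℕ) :
    cnt 0 p a b k = if a = b ∧ k = 0 then 1 else 0 := by
  unfold cnt
  by_cases hab : a = b
  · by_cases hk : k = 0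
    · subst hab; subst hk
      rw [if_pos ⟨rfl, rfl⟩]
      have hiff : ∀ w : Fin 1 → Bool,
          (wcN 0 p w ∧ w 0 = a ∧ w (Fin.last 0) = a ∧ wt w = 0) ↔ (w = fun _ => a) := by
        intro w
        constructor
        · rintro ⟨-, h0, -, -⟩
          funext x
          rw [Subsingleton.elim x 0, h0]
        · rintro rfl
          exact ⟨fun e => e.elim0, rfl, rfl, by simp [wt]⟩
      rw [Nat.card_congr (Equiv.subtypeEquivRight hiff), Nat.card_eq_fintype_card]
      exact Fintype.card_subtype_eq _
    · rw [if_neg (by tauto)]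
      apply card_empty_subtype
      rintro w ⟨-, -, -, h4⟩
      rw [show wt w = 0 by simp [wt]] at h4
      exact hk h4.symm
  · rw [if_neg (by tauto)]
    apply card_empty_subtype
    rintro w ⟨-, h2, h3, -⟩
    rw [show (Fin.last 0) = 0 from rfl] at h3
    rw [h2] at h3
    exact hab h3

theorem transfer : ∀ (N : ℕ) (p : ℕ → Bool) (a b : Bool) (k : ℕ),
    (ent (PmN N p) a b).coeff k = (cnt N p a b k : ℤ)
  | 0, p, a, b, k => by
    rw [cnt_zero]
    show (ent M2.one a b).coeff k = _
    rw [ent_one]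
    by_cases hab : a = b
    · rw [if_pos hab]
      by_cases hk : k = 0
      · subst hk
        rw [if_pos ⟨hab, rfl⟩]
        simp
      · rw [if_neg (by tauto)]
        simp [Polynomial.coeff_one, hk]
    · rw [if_neg hab, if_neg (by tauto)]
      simp
  | (N+1), p, a, b, k => by
    rw [cnt_succ]
    show (ent (M2.mul (Mq (p 0)) (PmN N fun i => p (i+1))) a b).coeff k = _
    rw [ent_mul, ent_Mq, ent_Mq, Polynomial.coeff_add]
    have hF : (MqE (p 0) a false * ent (PmN N fun i => p (i+1)) false b).coeff k =
        ((if ed (p 0) a false then cntTot N (fun i => p (i+1)) false b k else 0 : ℕ) : ℤ) := by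
      unfold MqE
      by_cases hed : ed (p 0) a false
      · rw [if_pos hed, if_pos hed]
        show (wq false * _).coeff k = _
        rw [show wq false = 1 from rfl, one_mul, transfer N _ false b k, cntTot_false]
      · rw [if_neg hed, if_neg hed, zero_mul]
        simp
    have hT : (MqE (p 0) a true * ent (PmN N fun i => p (i+1)) true b).coeff k =
        ((if ed (p 0) a true then cntTot N (fun i => p (i+1)) true b k else 0 : ℕ) : ℤ) := by
      unfold MqE
      by_cases hed : ed (p 0) a true
      · rw [if_pos hed, if_pos hed]
        show (wq true * _).coeff k = _
        rw [show wq true = X from rfl]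
        cases k with
        | zero =>
          rw [cntTot_true_zero]
          simp [Polynomial.mul_coeff_zero]
        | succ k' =>
          rw [Polynomial.coeff_X_mul, cntTot_true_succ, transfer N _ true b k']
      · rw [if_neg hed, if_neg hed, zero_mul]
        simp
    rw [hF, hT]
    push_cast
    ring


theorem ed_not (c a b : Bool) : ed (!c) (!a) (!b) ↔ ed c a b := by
  cases c <;> cases a <;> cases b <;> simp [ed]

theorem wcN_not (N : ℕ) (p : ℕ → Bool) (w : Fin (N+1) → Bool) :
    wcN N (fun i => !(p i)) (fun x => !(w x)) ↔ wcN N p w :=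
  forall_congr' fun e => ed_not _ _ _

theorem total_not {N : ℕ} (w : Fin (N+1) → Bool) :
    total (fun x => !(w x)) = (N+1) - total w := by
  have hsum : total w + total (fun x => !(w x)) = N+1 := by
    unfold total
    rw [← Finset.sum_add_distrib]
    rw [Finset.sum_congr rfl (fun x _ => show (if w x then 1 else 0) + (if !(w x) then 1 else 0) = 1 by
      cases h : w x <;> simp [h])]
    simp
  omega

theorem cntTot_compl (N : ℕ) (p : ℕ → Bool) (a b : Bool) (k : ℕ) (hk : k ≤ N+1) :
    cntTot N p a b k = cntTot N (fun i => !(p i)) (!a) (!b) (N+1-k) := by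
  unfold cntTot
  apply Nat.card_congr
  refine ⟨fun w => ⟨fun x => !(w.1 x), ?_⟩, fun w => ⟨fun x => !(w.1 x), ?_⟩, ?_, ?_⟩
  · obtain ⟨w, h1, h2, h3, h4⟩ := w
    dsimp only
    refine ⟨(wcN_not N p w).mpr h1, by rw [h2], by rw [h3], by rw [total_not, h4]⟩
  · obtain ⟨w, h1, h2, h3, h4⟩ := w
    dsimp only
    have h1' : wcN N p (fun x => !(w x)) := by
      rw [← wcN_not]
      convert h1 using 2 <;> simp
    refine ⟨h1', by rw [h2]; simp, by rw [h3]; simp, ?_⟩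
    rw [total_not]
    have := total_le w
    omega
  · rintro ⟨w, hw⟩
    apply Subtype.ext
    funext x
    simp
  · rintro ⟨w, hw⟩
    apply Subtype.ext
    funext x
    simp

/-- the master counting identity. -/
theorem master (N : ℕ) (p : ℕ → Bool) (k : ℕ) :
    cntTot N p true false k + cntTot N (fun i => !(p i)) true false k =
    cntTot N p false true k + cntTot N (fun i => !(p i)) false true k := by
  have hphi := phi_key N p
  cases k with
  | zero =>
    rw [cntTot_true_zero, cntTot_true_zero, cntTot_false, cntTot_false]
    have h0 := congrArg (fun q => Polynomial.coeff q 0) hphi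
    simp only [Polynomial.coeff_add, Polynomial.mul_coeff_zero, Polynomial.coeff_X_zero,
      zero_mul, add_zero, zero_add] at h0
    have e1 : (PmN N p).ft = ent (PmN N p) false true := rfl
    have e2 : (PmN N (fun i => !(p i))).ft = ent (PmN N (fun i => !(p i))) false true := rfl
    rw [e1, e2] at h0
    rw [transfer, transfer] at h0
    omega
  | succ k' =>
    rw [cntTot_true_succ, cntTot_true_succ, cntTot_false, cntTot_false]
    have h0 := congrArg (fun q => Polynomial.coeff q (k'+1)) hphi
    simp only [Polynomial.coeff_add, Polynomial.coeff_X_mul] at h0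
    have e1 : (PmN N p).ft = ent (PmN N p) false true := rfl
    have e2 : (PmN N (fun i => !(p i))).ft = ent (PmN N (fun i => !(p i))) false true := rfl
    have e3 : (PmN N p).tf = ent (PmN N p) true false := rfl
    have e4 : (PmN N (fun i => !(p i))).tf = ent (PmN N (fun i => !(p i))) true false := rfl
    rw [e1, e2, e3, e4, transfer, transfer, transfer, transfer] at h0
    omega


theorem ed_false' (a b : Bool) : ed false a b ↔ (b = true → a = true) := by simp [ed]
theorem ed_true' (a b : Bool) : ed true a b ↔ (a = true → b = true) := by simp [ed]

def pB (β : List ℕ) : ℕ → Bool := fun e => if upEdge β e then false else true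

theorem ideal_iff_step (β : List ℕ) (I : Finset (Fin (β.sum + 1))) :
    IsFenceIdeal β I ↔ ∀ x y, fenceStep β x y → y ∈ I → x ∈ I := by
  constructor
  · intro h x y hs
    exact h x y (Relation.ReflTransGen.single hs)
  · intro h x y hle
    induction hle with
    | refl => exact id
    | tail hab hbc ih => exact fun hy => ih (h _ _ hbc hy)

theorem step_iff_wcN (β : List ℕ) (I : Finset (Fin (β.sum + 1))) :
    (∀ x y, fenceStep β x y → y ∈ I → x ∈ I) ↔
      wcN β.sum (pB β) (fun i => decide (i ∈ I)) := by
  constructor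
  · intro h e
    by_cases up : upEdge β e.val
    · rw [show pB β e.val = false by simp [pB, up]]
      rw [ed_false']
      show decide (e.succ ∈ I) = true → decide (e.castSucc ∈ I) = true
      simp only [decide_eq_true_eq]
      intro hy
      refine h e.castSucc e.succ (Or.inl ⟨?_, ?_⟩) hy
      · simp
      · simpa using up
    · rw [show pB β e.val = true by simp [pB, up]]
      rw [ed_true']
      show decide (e.castSucc ∈ I) = true → decide (e.succ ∈ I) = true
      simp only [decide_eq_true_eq]
      intro hy
      refine h e.succ e.castSucc (Or.inr ⟨?_, ?_⟩) hy
      · simp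
      · simpa using up
  · intro h x y hs
    rcases hs with ⟨hxy, up⟩ | ⟨hxy, nup⟩
    · have hx : x.val < β.sum := by
        have := y.isLt
        omega
      have he := h ⟨x.val, hx⟩
      rw [show pB β (⟨x.val, hx⟩ : Fin β.sum).val = false by simp [pB, up]] at he
      rw [ed_false'] at he
      have hcs : (⟨x.val, hx⟩ : Fin β.sum).castSucc = x := by
        apply Fin.ext
        simp
      have hsu : (⟨x.val, hx⟩ : Fin β.sum).succ = y := by
        apply Fin.ext
        simp [hxy]
      rw [hcs, hsu] at he
      simp only [decide_eq_true_eq] at he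
      exact he
    · have hy' : y.val < β.sum := by
        have := x.isLt
        omega
      have he := h ⟨y.val, hy'⟩
      rw [show pB β (⟨y.val, hy'⟩ : Fin β.sum).val = true by simp [pB, nup]] at he
      rw [ed_true'] at he
      have hcs : (⟨y.val, hy'⟩ : Fin β.sum).castSucc = y := by
        apply Fin.ext
        simp
      have hsu : (⟨y.val, hy'⟩ : Fin β.sum).succ = x := by
        apply Fin.ext
        simp [hxy]
      rw [hcs, hsu] at he
      simp only [decide_eq_true_eq] at he
      exact he

theorem fence_iff (β : List ℕ) (I : Finset (Fin (β.sum + 1))) :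
    IsFenceIdeal β I ↔ wcN β.sum (pB β) (fun i => decide (i ∈ I)) :=
  (ideal_iff_step β I).trans (step_iff_wcN β I)

def fwEquiv (n : ℕ) : Finset (Fin n) ≃ (Fin n → Bool) where
  toFun I := fun i => decide (i ∈ I)
  invFun w := Finset.univ.filter (fun i => w i = true)
  left_inv I := by ext i; simp
  right_inv w := by funext i; simp

theorem total_card (n : ℕ) (I : Finset (Fin (n+1))) :
    total (fun i => decide (i ∈ I)) = I.card := by
  unfold total
  rw [Finset.sum_congr rfl (fun x _ =>
    show (if (decide (x ∈ I) : Bool) then (1:ℕ) else 0) = if x ∈ I then 1 else 0 by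
      by_cases h : x ∈ I <;> simp [h])]
  rw [Finset.sum_ite_mem, Finset.univ_inter]
  exact (Finset.card_eq_sum_ones I).symm

theorem leftCount_eq (β : List ℕ) (k : ℕ) :
    leftCount β k = cntTot β.sum (pB β) true false k := by
  unfold leftCount cntTot
  apply Nat.card_congr
  apply Equiv.subtypeEquiv (fwEquiv (β.sum + 1))
  intro I
  show _ ↔ (wcN β.sum (pB β) (fun i => decide (i ∈ I)) ∧ decide ((0 : Fin (β.sum+1)) ∈ I) = true
    ∧ decide (Fin.last β.sum ∈ I) = false ∧ total (fun i => decide (i ∈ I)) = k)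
  rw [← fence_iff, total_card, decide_eq_true_eq, decide_eq_false_iff_not]
  tauto

theorem rightCount_eq (β : List ℕ) (k : ℕ) :
    rightCount β k = cntTot β.sum (pB β) false true k := by
  unfold rightCount cntTot
  apply Nat.card_congr
  apply Equiv.subtypeEquiv (fwEquiv (β.sum + 1))
  intro I
  show _ ↔ (wcN β.sum (pB β) (fun i => decide (i ∈ I)) ∧ decide ((0 : Fin (β.sum+1)) ∈ I) = false
    ∧ decide (Fin.last β.sum ∈ I) = true ∧ total (fun i => decide (i ∈ I)) = k)
  rw [← fence_iff, total_card, decide_eq_true_eq, decide_eq_false_iff_not]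
  tauto



end
end FenceAux

/-- For a composition `β` of `n-1` with an even number of parts, the
sequence `(f_k - g_k)` is symmetric with center `n/2`, where `f_k` (resp. `g_k`)
counts size-`k` lower ideals of `F(β)` containing `x₁` but not `xₙ`
(resp. `xₙ` but not `x₁`).  Here `n = β.sum + 1`. -/
theorem fence_boundary_difference_symmetric (β : List ℕ) (hβ : IsComposition β)
    (heven : Even β.length) :
    ∀ k ≤ β.sum + 1,
      (leftCount β k : ℤ) - rightCount β k =
        (leftCount β (β.sum + 1 - k) : ℤ) - rightCount β (β.sum + 1 - k) := by
  intro k hk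
  rw [FenceAux.leftCount_eq, FenceAux.rightCount_eq, FenceAux.leftCount_eq, FenceAux.rightCount_eq]
  have hC1 : FenceAux.cntTot β.sum (FenceAux.pB β) true false (β.sum + 1 - k) =
      FenceAux.cntTot β.sum (fun i => !(FenceAux.pB β i)) false true k := by
    rw [FenceAux.cntTot_compl β.sum (FenceAux.pB β) true false (β.sum+1-k) (by omega)]
    simp only [Bool.not_true, Bool.not_false]
    congr 1
    omega
  have hC2 : FenceAux.cntTot β.sum (FenceAux.pB β) false true (β.sum + 1 - k) =
      FenceAux.cntTot β.sum (fun i => !(FenceAux.pB β i)) true false k := by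
    rw [FenceAux.cntTot_compl β.sum (FenceAux.pB β) false true (β.sum+1-k) (by omega)]
    simp only [Bool.not_true, Bool.not_false]
    congr 1
    omega
  have hM := FenceAux.master β.sum (FenceAux.pB β) k
  rw [hC1, hC2]
  omega
end

section
/- For positive integers a and b, the circular fence poset F̄((a,b)) has exactly ab+2 lower ideals, and its rank polynomial is R̄((a,b);q) = 1 + q·[a]_q·[b]_q + q^{a+b}, where [k]_q = 1+q+⋯+q^{k−1}. -/
/-!
Index the elements of `F̄((a, b))` by `0, …, a + b - 1`. Then `0` is the minimum and `a` the
maximum, and between them run the two chains `1 < ⋯ < a - 1` and `a + b - 1 < ⋯ < a + 1`. A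
nonempty proper lower ideal therefore contains `0`, omits `a` and meets each chain in an initial
segment, so it is `{0, …, i} ∪ {a + b - j, …, a + b - 1}` for unique `i < a` and `j < b`, of size
`i + 1 + j`. With `∅` and the whole poset this gives `a * b + 2` ideals and the rank polynomial
`1 + q [a]_q [b]_q + q^(a+b)`.
-/

attribute [local instance] Classical.propDecidable

open Finset

section CircularFence

variable {α : List ℕ}

theorem isCIdeal_iff_forall_cStep {I : Finset (Fin α.sum)} :
    IsCIdeal α I ↔ ∀ x y, cStep α x y → y ∈ I → x ∈ I := by
  refine ⟨fun h x y hxy => h x y (.single hxy), fun h x y hxy => ?_⟩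
  induction hxy with
  | refl => exact id
  | tail _ hstep ih => exact fun hy => ih (h _ _ hstep hy)

variable (α)

noncomputable def cIdeals : Finset (Finset (Fin α.sum)) := univ.filter (IsCIdeal α)

theorem natCard_isCIdeal :
    Nat.card {I : Finset (Fin α.sum) // IsCIdeal α I} = #(cIdeals α) := by
  rw [← Nat.card_eq_finsetCard]
  exact Nat.card_congr (Equiv.subtypeEquivRight fun I => by simp [cIdeals])

theorem cRank_eq_card_filter (k : ℕ) : cRank α k = #((cIdeals α).filter (#· = k)) := by
  rw [← Nat.card_eq_finsetCard]
  exact Nat.card_congr (Equiv.subtypeEquivRight fun I => by simp [cIdeals])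

theorem sum_cRank_mul_pow {S : Type*} [Semiring S] (x : S) :
    ∑ k ∈ range (α.sum + 1), (cRank α k : S) * x ^ k = ∑ I ∈ cIdeals α, x ^ #I := by
  have hmaps : ∀ I ∈ cIdeals α, #I ∈ range (α.sum + 1) := fun I _ => by
    simpa [Nat.lt_succ_iff] using card_le_univ I
  rw [← sum_fiberwise_of_maps_to hmaps]
  refine sum_congr rfl fun k _ => ?_
  rw [sum_congr rfl fun I hI => by rw [(mem_filter.1 hI).2], sum_const, nsmul_eq_mul,
    cRank_eq_card_filter]

end CircularFence

section TwoParts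

variable {a b : ℕ}

theorem val_lt_pair_sum (x : Fin ([a, b].sum)) : (x : ℕ) < a + b := x.isLt

theorem upEdge_pair_iff {e : ℕ} (he : e < a + b) : upEdge [a, b] e ↔ e < a := by
  have hrange : List.range 2 = [0, 1] := rfl
  have hlast : ¬ a + b ≤ e := by omega
  by_cases h : a ≤ e
  · simp [upEdge, segIdx, hrange, h, hlast, Nat.even_add_one]
  · simp [upEdge, segIdx, hrange, h, hlast]
    omega

theorem cStep_pair_iff {x y : Fin ([a, b].sum)} :
    cStep [a, b] x y ↔
      (y.val = (x.val + 1) % (a + b) ∧ x.val < a) ∨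
      (x.val = (y.val + 1) % (a + b) ∧ a ≤ y.val) := by
  rw [cStep, upEdge_pair_iff (val_lt_pair_sum x), upEdge_pair_iff (val_lt_pair_sum y), not_lt]
  rfl

theorem cLE_pair_of_le_of_le {x y : Fin ([a, b].sum)} (hxy : (x : ℕ) ≤ y)
    (hy : (y : ℕ) ≤ a) : cLE [a, b] x y := by
  obtain ⟨d, hd⟩ := Nat.exists_eq_add_of_le hxy
  induction d generalizing y with
  | zero => obtain rfl : y = x := Fin.ext hd; exact .refl
  | succ d ih =>
    have hy' := val_lt_pair_sum y
    have hstep : cStep [a, b] ⟨x + d, by omega⟩ y :=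
      cStep_pair_iff.2 (.inl ⟨by dsimp only; rw [Nat.mod_eq_of_lt (by omega)]; omega,
        by dsimp only; omega⟩)
    exact (ih (Nat.le_add_right _ _) (by dsimp only; omega) rfl).tail hstep

theorem cLE_pair_of_le_of_ge {x y : Fin ([a, b].sum)} (hay : a ≤ (y : ℕ))
    (hyx : (y : ℕ) ≤ x) : cLE [a, b] x y := by
  obtain ⟨d, hd⟩ := Nat.exists_eq_add_of_le hyx
  induction d generalizing x with
  | zero => obtain rfl : x = y := Fin.ext hd; exact .refl
  | succ d ih =>
    have hx' := val_lt_pair_sum x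
    have hstep : cStep [a, b] x ⟨y + d, by omega⟩ :=
      cStep_pair_iff.2 (.inr ⟨by dsimp only; rw [Nat.mod_eq_of_lt (by omega)]; omega,
        by dsimp only; omega⟩)
    exact .head hstep (ih (Nat.le_add_right _ _) rfl)

theorem cLE_pair_of_val_eq_zero (hb : 0 < b) {x : Fin ([a, b].sum)} (hx : (x : ℕ) = 0)
    (y : Fin ([a, b].sum)) : cLE [a, b] x y := by
  have hy := val_lt_pair_sum y
  rcases le_or_gt (y : ℕ) a with hya | hya
  · exact cLE_pair_of_le_of_le (by omega) hya
  · have hstep : cStep [a, b] x ⟨a + b - 1, (by omega : a + b - 1 < a + b)⟩ :=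
      cStep_pair_iff.2 (.inr ⟨by dsimp only; rw [Nat.sub_add_cancel (by omega), Nat.mod_self, hx],
        by dsimp only; omega⟩)
    exact .head hstep (cLE_pair_of_le_of_ge hya.le (by dsimp only; omega))

theorem cLE_pair_of_val_eq_a (x : Fin ([a, b].sum)) {y : Fin ([a, b].sum)} (hy : (y : ℕ) = a) :
    cLE [a, b] x y := by
  rcases le_total (x : ℕ) a with hxa | hxa
  · exact cLE_pair_of_le_of_le (by omega) hy.le
  · exact cLE_pair_of_le_of_ge hy.ge (by omega)

noncomputable def arcIdeal (a b i j : ℕ) : Finset (Fin ([a, b].sum)) :=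
  univ.filter fun x => (x : ℕ) ≤ i ∨ a + b - j ≤ x

@[simp]
theorem mem_arcIdeal {i j : ℕ} {x : Fin ([a, b].sum)} :
    x ∈ arcIdeal a b i j ↔ (x : ℕ) ≤ i ∨ a + b - j ≤ x := by
  simp only [arcIdeal, mem_filter, mem_univ, true_and]

theorem isCIdeal_arcIdeal {i j : ℕ} (hi : i < a) (hj : j < b) :
    IsCIdeal [a, b] (arcIdeal a b i j) := by
  refine isCIdeal_iff_forall_cStep.2 fun x y hxy hy => ?_
  have := val_lt_pair_sum x
  have := val_lt_pair_sum y
  rw [mem_arcIdeal] at hy ⊢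
  rcases cStep_pair_iff.1 hxy with ⟨hyx, hxa⟩ | ⟨hxy, hay⟩
  · rw [Nat.mod_eq_of_lt (by omega)] at hyx
    omega
  · rcases (by omega : (y : ℕ) + 1 < a + b ∨ (y : ℕ) + 1 = a + b) with h | h
    · rw [Nat.mod_eq_of_lt h] at hxy
      omega
    · rw [h, Nat.mod_self] at hxy
      omega

theorem IsCIdeal.pair_exists_mem_iff_le {I : Finset (Fin ([a, b].sum))} (hI : IsCIdeal [a, b] I)
    {z : Fin ([a, b].sum)} (hz : z ∈ I) (hz0 : (z : ℕ) = 0) (htop : ∀ x ∈ I, (x : ℕ) ≠ a) :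
    ∃ i < a, ∀ x : Fin ([a, b].sum), (x : ℕ) < a → (x ∈ I ↔ (x : ℕ) ≤ i) := by
  set L := I.filter fun x : Fin ([a, b].sum) => (x : ℕ) < a
  have hL : L.Nonempty := ⟨z, mem_filter.2 ⟨hz, by have := htop z hz; omega⟩⟩
  have hmax := mem_filter.1 (L.max'_mem hL)
  refine ⟨L.max' hL, hmax.2, fun x hx => ⟨fun h => L.le_max' x (mem_filter.2 ⟨h, hx⟩),
    fun h => hI x _ (cLE_pair_of_le_of_le h hmax.2.le) hmax.1⟩⟩

theorem IsCIdeal.pair_exists_mem_iff_ge (hb : 0 < b) {I : Finset (Fin ([a, b].sum))}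
    (hI : IsCIdeal [a, b] I) :
    ∃ j < b, ∀ x : Fin ([a, b].sum), a < (x : ℕ) → (x ∈ I ↔ a + b - j ≤ x) := by
  set R := I.filter fun x : Fin ([a, b].sum) => a < (x : ℕ)
  rcases R.eq_empty_or_nonempty with hR | hR
  · refine ⟨0, hb, fun x hx => iff_of_false (fun h => ?_) ?_⟩
    · have hxR : x ∈ R := mem_filter.2 ⟨h, hx⟩
      exact notMem_empty x (hR ▸ hxR)
    · have := val_lt_pair_sum x
      omega
  · have hmin := mem_filter.1 (R.min'_mem hR)
    have := val_lt_pair_sum (R.min' hR)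
    refine ⟨a + b - R.min' hR, by omega, fun x hx => ⟨fun h => ?_, fun h => ?_⟩⟩
    · have : R.min' hR ≤ x := R.min'_le x (mem_filter.2 ⟨h, hx⟩)
      omega
    · exact hI x _ (cLE_pair_of_le_of_ge hmin.2.le (by omega)) hmin.1

theorem exists_eq_arcIdeal (hb : 0 < b) {I : Finset (Fin ([a, b].sum))} (hI : IsCIdeal [a, b] I)
    (hne : I.Nonempty) (htop : ∀ x ∈ I, (x : ℕ) ≠ a) :
    ∃ i < a, ∃ j < b, I = arcIdeal a b i j := by
  obtain ⟨z, hz⟩ := hne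
  have hbot : (⟨0, (by omega : 0 < a + b)⟩ : Fin ([a, b].sum)) ∈ I :=
    hI _ z (cLE_pair_of_val_eq_zero hb rfl z) hz
  obtain ⟨i, hi, hleft⟩ := hI.pair_exists_mem_iff_le hbot rfl htop
  obtain ⟨j, hj, hright⟩ := hI.pair_exists_mem_iff_ge hb
  refine ⟨i, hi, j, hj, ext fun x => ?_⟩
  rw [mem_arcIdeal]
  rcases lt_trichotomy (x : ℕ) a with h | h | h
  · rw [hleft x h]
    omega
  · exact iff_of_false (fun hx => htop x hx h) (by omega)
  · rw [hright x h]
    omega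

theorem isCIdeal_pair_iff (hb : 0 < b) {I : Finset (Fin ([a, b].sum))} :
    IsCIdeal [a, b] I ↔ I = ∅ ∨ I = univ ∨ ∃ i < a, ∃ j < b, I = arcIdeal a b i j := by
  refine ⟨fun hI => ?_, ?_⟩
  · rcases I.eq_empty_or_nonempty with hempty | hne
    · exact .inl hempty
    by_cases htop : ∃ y ∈ I, (y : ℕ) = a
    · obtain ⟨y, hy, hya⟩ := htop
      exact .inr (.inl (eq_univ_of_forall fun x => hI x y (cLE_pair_of_val_eq_a x hya) hy))
    · push Not at htop
      exact .inr (.inr (exists_eq_arcIdeal hb hI hne htop))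
  · rintro (rfl | rfl | ⟨i, hi, j, hj, rfl⟩)
    · exact fun _ _ _ h => absurd h (notMem_empty _)
    · exact fun x _ _ _ => mem_univ x
    · exact isCIdeal_arcIdeal hi hj

theorem card_arcIdeal {i j : ℕ} (hi : i < a) (hj : j < b) :
    #(arcIdeal a b i j) = i + 1 + j := by
  have hsplit : arcIdeal a b i j =
      univ.filter (fun x : Fin ([a, b].sum) => (x : ℕ) < i + 1) ∪
        univ.filter (fun x : Fin ([a, b].sum) => ¬ (x : ℕ) < a + b - j) := by
    ext x
    simp only [mem_arcIdeal, mem_union, mem_filter, mem_univ, true_and]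
    omega
  have hdisj : Disjoint (univ.filter (fun x : Fin ([a, b].sum) => (x : ℕ) < i + 1))
      (univ.filter (fun x : Fin ([a, b].sum) => ¬ (x : ℕ) < a + b - j)) := by
    rw [disjoint_filter]
    intro x _ _
    omega
  have hcompl := card_filter_add_card_filter_not (s := univ)
    (fun x : Fin ([a, b].sum) => (x : ℕ) < a + b - j)
  have hsum : [a, b].sum = a + b := rfl
  rw [hsplit, card_union_of_disjoint hdisj, Fin.card_filter_val_lt]
  rw [Fin.card_filter_val_lt, card_univ, Fintype.card_fin] at hcompl
  omega

theorem arcIdeal_injOn :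
    Set.InjOn (fun p : ℕ × ℕ => arcIdeal a b p.1 p.2) ↑(range a ×ˢ range b) := by
  rintro ⟨i, j⟩ hij ⟨i', j'⟩ hij' h
  simp only [coe_product, Set.mem_prod, mem_coe, mem_range] at hij hij' h
  have hmem (k : ℕ) (hk : k < a) : k ≤ i ↔ k ≤ i' := by
    have := congrArg ((⟨k, (by omega : k < a + b)⟩ : Fin ([a, b].sum)) ∈ ·) h
    simp only [mem_arcIdeal, eq_iff_iff] at this
    omega
  have hi : i = i' := le_antisymm ((hmem i hij.1).1 le_rfl) ((hmem i' hij'.1).2 le_rfl)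
  have hcard : i + 1 + j = i' + 1 + j' := by
    rw [← card_arcIdeal hij.1 hij.2, ← card_arcIdeal hij'.1 hij'.2, h]
  exact Prod.ext hi (by omega)

noncomputable def arcIdeals (a b : ℕ) : Finset (Finset (Fin ([a, b].sum))) :=
  (range a ×ˢ range b).image fun p => arcIdeal a b p.1 p.2

theorem card_arcIdeals : #(arcIdeals a b) = a * b := by
  rw [arcIdeals, card_image_of_injOn arcIdeal_injOn, card_product, card_range, card_range]

theorem sum_arcIdeals_pow {S : Type*} [CommSemiring S] (x : S) :
    ∑ I ∈ arcIdeals a b, x ^ #I = x * (∑ i ∈ range a, x ^ i) * ∑ j ∈ range b, x ^ j := by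
  rw [arcIdeals, sum_image arcIdeal_injOn, sum_product, mul_assoc, sum_mul_sum, mul_sum]
  refine sum_congr rfl fun i hi => ?_
  rw [mul_sum]
  refine sum_congr rfl fun j hj => ?_
  rw [card_arcIdeal (mem_range.1 hi) (mem_range.1 hj)]
  ring

theorem cIdeals_pair (hb : 0 < b) : cIdeals [a, b] = insert ∅ (insert univ (arcIdeals a b)) := by
  ext I
  simp only [cIdeals, arcIdeals, mem_filter, mem_univ, true_and, isCIdeal_pair_iff hb,
    mem_insert, mem_image, mem_product, mem_range, Prod.exists]
  grind

theorem univ_notMem_arcIdeals (hb : 0 < b) : univ ∉ arcIdeals a b := by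
  simp only [arcIdeals, mem_image, mem_product, mem_range, Prod.exists, not_exists, not_and]
  intro i j hij h
  have := h ▸ mem_univ (⟨a, (by omega : a < a + b)⟩ : Fin ([a, b].sum))
  rw [mem_arcIdeal] at this
  dsimp only at this
  omega

theorem empty_notMem_insert_univ_arcIdeals (hb : 0 < b) :
    ∅ ∉ insert univ (arcIdeals a b) := by
  intro h
  have hbot : (⟨0, (by omega : 0 < a + b)⟩ : Fin ([a, b].sum)) ∈ (∅ : Finset _) := by
    rcases mem_insert.1 h with h | h
    · exact h ▸ mem_univ _
    · obtain ⟨p, -, hp⟩ := mem_image.1 h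
      exact hp ▸ mem_arcIdeal.2 (.inl p.1.zero_le)
  exact notMem_empty _ hbot

end TwoParts

open Polynomial in
theorem circular_rank_two_parts_general (a b : ℕ) (hb : 0 < b) :
    Nat.card {I : Finset (Fin ([a, b].sum)) // IsCIdeal [a, b] I} = a * b + 2 ∧
    (∑ k ∈ Finset.range (a + b + 1), (cRank [a, b] k : Polynomial ℕ) * X ^ k) =
      1 + X * (∑ i ∈ Finset.range a, (X : Polynomial ℕ) ^ i) *
          (∑ i ∈ Finset.range b, (X : Polynomial ℕ) ^ i) + X ^ (a + b) := by
  have hcard_univ : #(univ : Finset (Fin ([a, b].sum))) = a + b := card_fin _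
  constructor
  · rw [natCard_isCIdeal, cIdeals_pair hb, card_insert_of_notMem
      (empty_notMem_insert_univ_arcIdeals hb), card_insert_of_notMem (univ_notMem_arcIdeals hb),
      card_arcIdeals]
  · refine (sum_cRank_mul_pow [a, b] X).trans ?_
    rw [cIdeals_pair hb, sum_insert (empty_notMem_insert_univ_arcIdeals hb),
      sum_insert (univ_notMem_arcIdeals hb), sum_arcIdeals_pow, card_empty, hcard_univ]
    ring

open Polynomial in
/-- `F̄((a,b))` has exactly `a*b + 2` lower ideals and rank polynomial
`1 + q·[a]_q·[b]_q + q^(a+b)`. -/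
theorem circular_rank_two_parts (a b : ℕ) (ha : 0 < a) (hb : 0 < b) :
    Nat.card {I : Finset (Fin ([a, b].sum)) // IsCIdeal [a, b] I} = a * b + 2 ∧
    (∑ k ∈ Finset.range (a + b + 1), (cRank [a, b] k : Polynomial ℕ) * X ^ k) =
      1 + X * (∑ i ∈ Finset.range a, (X : Polynomial ℕ) ^ i) *
          (∑ i ∈ Finset.range b, (X : Polynomial ℕ) ^ i) + X ^ (a + b) :=
  circular_rank_two_parts_general a b hb
end

section
/- For every positive integer a, the rank sequence of the circular fence poset F̄((1,a,1,a)) is (1,2,…,a, a+1, a, a+1, a, a−1,…,2,1); that is, r̄_k = k+1 for 0 ≤ k ≤ a, r̄_{a+1} = a, and r̄_k = r̄_{2a+2−k} for k > a+1. In particular this rank sequence is not unimodal. -/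
attribute [local instance] Classical.propDecidable

/-
`F̄(1,a,1,a)` is the disjoint union of two chains of `a + 1` elements, glued by two relations: the
bottom of each chain lies below the top of the other. A lower ideal is therefore determined by the
numbers `i`, `j` of its elements on the two chains, and every `0 ≤ i, j ≤ a + 1` occurs except that
`i = a + 1` forces `j ≥ 1` and vice versa. Among the pairs with `i + j = k` this leaves `k + 1`
for `k ≤ a`, only `a` for `k = a + 1` (where `(a+1, 0)` and `(0, a+1)` are lost), and `2a + 3 - k`
above, so the sequence dips at `a + 1`.
-/

theorem Relation.ReflTransGen.of_backward_closed {α : Type*} {r : α → α → Prop} {p : α → Prop}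
    (hp : ∀ x y, r x y → p y → p x) {x y : α} (hxy : Relation.ReflTransGen r x y) (hy : p y) :
    p x := by
  induction hxy with
  | refl => exact hy
  | tail _ hbc ih => exact ih (hp _ _ hbc hy)

theorem Finset.eq_range_card_of_pred_mem {s : Finset ℕ} (hs : ∀ n, n + 1 ∈ s → n ∈ s) :
    s = Finset.range s.card := by
  have hle : ∀ d n, n + d ∈ s → n ∈ s := by
    intro d
    induction d with
    | zero => exact fun n hn => hn
    | succ d ih => exact fun n hn => ih n (hs _ (by rwa [← add_assoc] at hn))
  have hsub : s ⊆ Finset.range s.card := by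
    intro n hn
    have : Finset.range (n + 1) ⊆ s := fun m hm => hle (n - m) m (by
      rw [Finset.mem_range] at hm; rwa [Nat.add_sub_cancel' (by omega)])
    simpa using Finset.card_le_card this
  exact Finset.eq_of_subset_of_card_le hsub (by simp)

namespace OneAOneA

variable {a : ℕ}

lemma sum_eq : [1, a, 1, a].sum = 2 * a + 2 := by
  simp only [List.sum_cons, List.sum_nil]
  ring

lemma val_lt (v : Fin [1, a, 1, a].sum) : v.val < 2 * a + 2 := sum_eq ▸ v.isLt

lemma lt_sum {v : ℕ} (hv : v < 2 * a + 2) : v < [1, a, 1, a].sum := sum_eq ▸ hv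

lemma upEdge_iff {e : ℕ} (he : e < 2 * a + 2) : upEdge [1, a, 1, a] e ↔ e = 0 ∨ e = a + 1 := by
  have hseg : segIdx [1, a, 1, a] e =
      (if 1 ≤ e then 1 else 0) + (if a + 1 ≤ e then 1 else 0) + (if a + 2 ≤ e then 1 else 0) := by
    simp only [segIdx, List.take_succ_cons, List.sum_cons, List.length_cons, List.length_nil,
      zero_add, Nat.reduceAdd, List.range_succ, List.range_zero, List.nil_append, List.cons_append,
      List.filter_cons, List.take_zero, List.sum_nil, add_zero, decide_eq_true_eq, List.take_nil,
      List.filter_nil, Order.add_one_le_iff]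
    split_ifs <;> simp_all <;> omega
  rw [upEdge, hseg]
  split_ifs <;> rw [Nat.even_iff] <;> omega

lemma cStep_iff (x y : Fin [1, a, 1, a].sum) :
    cStep [1, a, 1, a] x y ↔
      ((y.val = x.val + 1 ∨ x.val = 2 * a + 1 ∧ y.val = 0) ∧ (x.val = 0 ∨ x.val = a + 1)) ∨
      ((x.val = y.val + 1 ∨ y.val = 2 * a + 1 ∧ x.val = 0) ∧ y.val ≠ 0 ∧ y.val ≠ a + 1) := by
  have hx := val_lt x
  have hy := val_lt y
  have hmod : ∀ v < 2 * a + 2,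
      (v + 1) % [1, a, 1, a].sum = if v = 2 * a + 1 then 0 else v + 1 := by
    intro v hv
    rw [sum_eq]
    split_ifs with h
    · rw [h, Nat.mod_self]
    · exact Nat.mod_eq_of_lt (by omega)
  unfold cStep
  rw [upEdge_iff hx, upEdge_iff hy, hmod _ hx, hmod _ hy]
  split_ifs <;> omega

/-- `F̄(1,a,1,a)` is the union of the chains `a+1 ⪯ a ⪯ ⋯ ⪯ 1` (`side = true`) and
`0 ⪯ 2a+1 ⪯ ⋯ ⪯ a+2` (`side = false`), glued by `0 ⪯ 1` and `a+1 ⪯ a+2` (nodes taken mod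
`2a+2`, so for `a = 0` the second chain is just `0`); `depth` is the position of a node in its
chain, counted from the bottom. -/
def side (a v : ℕ) : Bool := decide (1 ≤ v ∧ v ≤ a + 1)

def depth (a v : ℕ) : ℕ := if v = 0 then 0 else if v ≤ a + 1 then a + 1 - v else 2 * a + 2 - v

lemma depth_le {v : ℕ} (hv : v < 2 * a + 2) : depth a v ≤ a := by
  unfold depth; split_ifs <;> omega

lemma eq_of_side_eq_of_depth_eq {v w : ℕ} (hv : v < 2 * a + 2) (hw : w < 2 * a + 2)
    (hside : side a v = side a w) (hdepth : depth a v = depth a w) : v = w := by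
  simp only [side, depth, decide_eq_decide, iff_iff_implies_and_implies] at hside hdepth
  split_ifs at hdepth <;> omega

lemma exists_side_depth (b : Bool) {d : ℕ} (hd : d ≤ a) :
    ∃ v < 2 * a + 2, side a v = b ∧ depth a v = d := by
  cases b
  · refine ⟨if d = 0 then 0 else 2 * a + 2 - d, ?_⟩
    simp only [side, depth, decide_eq_false_iff_not]
    split_ifs <;> omega
  · refine ⟨a + 1 - d, ?_⟩
    simp only [side, depth, decide_eq_true_eq]
    split_ifs <;> omega

lemma exists_cStep_depth_succ {n : ℕ} (v : Fin [1, a, 1, a].sum) (hv : depth a v = n + 1) :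
    ∃ w, cStep [1, a, 1, a] w v ∧ side a w = side a v ∧ depth a w = n := by
  have hlt := val_lt v
  refine ⟨⟨if v.val = 2 * a + 1 then 0 else v.val + 1, lt_sum (by split_ifs <;> omega)⟩, ?_⟩
  simp only [cStep_iff, side, depth, decide_eq_decide, iff_iff_implies_and_implies] at hv ⊢
  split_ifs at hv ⊢ <;> first | contradiction | omega

lemma exists_cStep_bot_top (b : Bool) :
    ∃ v w : Fin [1, a, 1, a].sum, side a v = b ∧ depth a v = a ∧ side a w = !b ∧ depth a w = 0 ∧
      cStep [1, a, 1, a] w v := by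
  obtain ⟨v, hv, hvb, hva⟩ := exists_side_depth b (le_refl a)
  obtain ⟨w, hw, hwb, hw0⟩ := exists_side_depth (!b) (Nat.zero_le a)
  refine ⟨⟨v, lt_sum hv⟩, ⟨w, lt_sum hw⟩, hvb, hva, hwb, hw0, ?_⟩
  rw [cStep_iff]
  dsimp only
  cases b <;>
    simp only [side, depth, Bool.not_true, Bool.not_false, decide_eq_true_eq,
      decide_eq_false_iff_not] at hvb hwb hva hw0 <;>
    split_ifs at hva hw0 <;> omega

lemma cStep_cases {w v : Fin [1, a, 1, a].sum} (h : cStep [1, a, 1, a] w v) :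
    (side a w = side a v ∧ depth a w + 1 = depth a v) ∨
      (side a w = !side a v ∧ depth a w = 0 ∧ depth a v = a) := by
  have hw := val_lt w
  have hv := val_lt v
  rw [cStep_iff] at h
  simp only [side, depth, ← decide_not, decide_eq_decide, iff_iff_implies_and_implies]
  split_ifs <;> omega

open Finset

def part (I : Finset (Fin [1, a, 1, a].sum)) (b : Bool) : Finset (Fin [1, a, 1, a].sum) :=
  I.filter fun v => side a v = b

lemma card_eq_card_part_add_card_part (I : Finset (Fin [1, a, 1, a].sum)) :
    I.card = (part I true).card + (part I false).card := by
  simp only [part, ← Bool.not_eq_true]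
  exact (card_filter_add_card_filter_not _).symm

lemma injOn_depth_part (I : Finset (Fin [1, a, 1, a].sum)) (b : Bool) :
    Set.InjOn (fun v : Fin [1, a, 1, a].sum => depth a v) (part I b) := by
  intro v hv w hw h
  simp only [part, coe_filter, Set.mem_ofPred_eq] at hv hw
  exact Fin.ext (eq_of_side_eq_of_depth_eq (val_lt v) (val_lt w) (hv.2.trans hw.2.symm) h)

variable {I : Finset (Fin [1, a, 1, a].sum)}

lemma image_depth_part (hI : IsCIdeal [1, a, 1, a] I) (b : Bool) :
    (part I b).image (fun v : Fin [1, a, 1, a].sum => depth a v) = range (part I b).card := by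
  rw [← card_image_of_injOn (injOn_depth_part I b)]
  refine Finset.eq_range_card_of_pred_mem fun n hn => ?_
  simp only [mem_image, part, mem_filter] at hn ⊢
  obtain ⟨v, ⟨hvI, hvb⟩, hvn⟩ := hn
  obtain ⟨w, hstep, hside, hdepth⟩ := exists_cStep_depth_succ v hvn
  exact ⟨w, ⟨hI w v (.single hstep) hvI, hside.trans hvb⟩, hdepth⟩

lemma mem_iff_depth_lt (hI : IsCIdeal [1, a, 1, a] I) (v : Fin [1, a, 1, a].sum) :
    v ∈ I ↔ depth a v < (part I (side a v)).card := by
  rw [← mem_range, ← image_depth_part hI]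
  simp only [mem_image, part, mem_filter]
  constructor
  · exact fun hv => ⟨v, ⟨hv, rfl⟩, rfl⟩
  · rintro ⟨w, ⟨hw, hside⟩, hdepth⟩
    rwa [← Fin.ext (eq_of_side_eq_of_depth_eq (val_lt w) (val_lt v) hside hdepth)]

lemma card_part_le (hI : IsCIdeal [1, a, 1, a] I) (b : Bool) : (part I b).card ≤ a + 1 := by
  rw [← range_subset_range, ← image_depth_part hI]
  intro d hd
  obtain ⟨v, -, rfl⟩ := mem_image.1 hd
  exact mem_range.2 (Nat.lt_succ_of_le (depth_le (val_lt v)))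

lemma one_le_card_part_not (hI : IsCIdeal [1, a, 1, a] I) {b : Bool}
    (hb : (part I b).card = a + 1) : 1 ≤ (part I !b).card := by
  obtain ⟨v, w, hv, hva, hw, hw0, hstep⟩ := exists_cStep_bot_top b
  have hvI : v ∈ I := by rw [mem_iff_depth_lt hI, hv, hb, hva]; omega
  have := (mem_iff_depth_lt hI w).1 (hI w v (.single hstep) hvI)
  rwa [hw, hw0] at this

/-- The possible sizes `n b` of the parts of an ideal on the two chains. -/
def Admissible (a : ℕ) (n : Bool → ℕ) : Prop := ∀ b, n b ≤ a + 1 ∧ (n b = a + 1 → 1 ≤ n !b)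

lemma admissible_cond_iff {i j : ℕ} :
    (Admissible a fun b => bif b then i else j) ↔
      i ≤ a + 1 ∧ j ≤ a + 1 ∧ (i = a + 1 → 1 ≤ j) ∧ (j = a + 1 → 1 ≤ i) := by
  simp only [Admissible, Bool.forall_bool, cond_true, cond_false, Bool.not_true, Bool.not_false]
  tauto

lemma admissible_card_part (hI : IsCIdeal [1, a, 1, a] I) :
    Admissible a fun b => (part I b).card :=
  fun b => ⟨card_part_le hI b, one_le_card_part_not hI⟩

variable (a) in
def idealOf (n : Bool → ℕ) : Finset (Fin [1, a, 1, a].sum) :=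
  univ.filter fun v => depth a v < n (side a v)

lemma eq_idealOf_card_part (hI : IsCIdeal [1, a, 1, a] I) :
    I = idealOf a fun b => (part I b).card := by
  ext v
  simp only [idealOf, mem_filter, mem_univ, true_and]
  exact mem_iff_depth_lt hI v

lemma isCIdeal_idealOf {n : Bool → ℕ} (hn : Admissible a n) :
    IsCIdeal [1, a, 1, a] (idealOf a n) := by
  intro x y hxy
  refine hxy.of_backward_closed (p := (· ∈ idealOf a n)) fun w v hstep hv => ?_
  simp only [idealOf, mem_filter, mem_univ, true_and] at hv ⊢
  rcases cStep_cases hstep with ⟨hside, hdepth⟩ | ⟨hside, hw0, hva⟩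
  · rw [hside]; omega
  · obtain ⟨hle, htop⟩ := hn (side a v)
    rw [hside, hw0]
    exact htop (by omega)

lemma card_part_idealOf {n : Bool → ℕ} (hn : ∀ b, n b ≤ a + 1) (b : Bool) :
    (part (idealOf a n) b).card = n b := by
  rw [← card_image_of_injOn (injOn_depth_part _ b)]
  convert card_range (n b)
  ext d
  simp only [mem_image, part, idealOf, mem_filter, mem_univ, true_and, mem_range]
  constructor
  · rintro ⟨v, ⟨hv, hb⟩, rfl⟩
    rwa [hb] at hv
  · intro hd
    obtain ⟨v, hv, hside, hdepth⟩ := exists_side_depth b (show d ≤ a by have := hn b; omega)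
    exact ⟨⟨v, lt_sum hv⟩, ⟨by rwa [hside, hdepth], hside⟩, hdepth⟩

lemma cRank_eq_card_filter_admissible (k : ℕ) :
    cRank [1, a, 1, a] k =
      ((range (k + 1)).filter fun i => Admissible a fun b => bif b then i else k - i).card := by
  rw [cRank, Nat.card_eq_fintype_card, Fintype.card_subtype]
  have hsplit : ∀ I : Finset (Fin [1, a, 1, a].sum), I.card = k →
      (fun b => bif b then (part I true).card else k - (part I true).card) =
        fun b => (part I b).card := by
    intro I hk
    funext b
    cases b <;> simp only [cond_false, cond_true]
    have := card_eq_card_part_add_card_part I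
    omega
  refine card_nbij' (fun I => (part I true).card)
    (fun i => idealOf a fun b => bif b then i else k - i) ?_ ?_ ?_ ?_
  · intro I hI
    simp only [coe_filter, mem_univ, true_and, Set.mem_ofPred_eq] at hI
    obtain ⟨hI, hk⟩ := hI
    have := card_eq_card_part_add_card_part I
    simp only [coe_filter, mem_range, Set.mem_ofPred_eq]
    exact ⟨by omega, hsplit I hk ▸ admissible_card_part hI⟩
  · intro i hi
    simp only [coe_filter, mem_range, Set.mem_ofPred_eq] at hi
    simp only [coe_filter, mem_univ, true_and, Set.mem_ofPred_eq]
    refine ⟨isCIdeal_idealOf hi.2, ?_⟩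
    rw [card_eq_card_part_add_card_part, card_part_idealOf (fun b => (hi.2 b).1),
      card_part_idealOf (fun b => (hi.2 b).1)]
    simp only [cond_true, cond_false]
    omega
  · intro I hI
    simp only [coe_filter, mem_univ, true_and, Set.mem_ofPred_eq] at hI
    simp only [hsplit I hI.2]
    exact (eq_idealOf_card_part hI.1).symm
  · intro i hi
    simp only [coe_filter, mem_range, Set.mem_ofPred_eq] at hi
    exact card_part_idealOf (fun b => (hi.2 b).1) true

lemma cRank_eq_of_admissible_iff {k lo hi : ℕ} (hhi : hi ≤ k)
    (h : ∀ i ≤ k, (Admissible a fun b => bif b then i else k - i) ↔ lo ≤ i ∧ i ≤ hi) :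
    cRank [1, a, 1, a] k = hi + 1 - lo := by
  rw [cRank_eq_card_filter_admissible, ← Nat.card_Icc]
  congr 1
  ext i
  simp only [mem_filter, mem_range, mem_Icc]
  constructor
  · exact fun ⟨hik, hv⟩ => (h i (by omega)).1 hv
  · exact fun hlohi => ⟨by omega, (h i (by omega)).2 hlohi⟩

lemma cRank_of_le {k : ℕ} (hk : k ≤ a) : cRank [1, a, 1, a] k = k + 1 :=
  cRank_eq_of_admissible_iff (lo := 0) le_rfl fun i hi => by rw [admissible_cond_iff]; omega

lemma cRank_succ_self : cRank [1, a, 1, a] (a + 1) = a :=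
  (cRank_eq_of_admissible_iff (lo := 1) (hi := a) (by omega) fun i hi => by
    rw [admissible_cond_iff]; omega).trans (by omega)

lemma cRank_of_lt {k : ℕ} (hk : a + 1 < k) (hk' : k ≤ 2 * a + 2) :
    cRank [1, a, 1, a] k = 2 * a + 3 - k :=
  (cRank_eq_of_admissible_iff (lo := k - (a + 1)) (hi := a + 1) (by omega) fun i hi => by
    rw [admissible_cond_iff]; omega).trans (by omega)

end OneAOneA

theorem not_unimodal_of_dip {s : ℕ → ℕ} {m i : ℕ} (hi : i + 2 ≤ m) (hdown : s (i + 1) < s i)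
    (hup : s (i + 1) < s (i + 2)) : ¬ Unimodal s m := by
  rintro ⟨j, -, hinc, hdec⟩
  rcases Nat.lt_or_ge i j with hij | hji
  · exact absurd (hinc i hij) (not_le.2 hdown)
  · exact absurd (hdec (i + 1) (by omega) (by omega)) (not_le.2 hup)

theorem circular_rank_1a1a_general (a : ℕ) :
    (∀ k ≤ a, cRank [1, a, 1, a] k = k + 1) ∧
    cRank [1, a, 1, a] (a + 1) = a ∧
    (∀ k, a + 1 < k → k ≤ 2 * a + 2 →
      cRank [1, a, 1, a] k = cRank [1, a, 1, a] (2 * a + 2 - k)) ∧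
    ¬ Unimodal (cRank [1, a, 1, a]) (2 * a + 2) := by
  open OneAOneA in
  refine ⟨fun k hk => cRank_of_le hk, cRank_succ_self, fun k hk hk' => ?_, ?_⟩
  · rw [cRank_of_lt hk hk', cRank_of_le (by omega)]
    omega
  · refine not_unimodal_of_dip (i := a) (by omega) ?_ ?_
    · rw [cRank_succ_self, cRank_of_le le_rfl]
      omega
    · rw [cRank_succ_self, cRank_of_lt (by omega) (by omega)]
      omega

/-- the rank sequence of `F̄((1,a,1,a))` is
`(1,2,…,a,a+1,a,a+1,a,a−1,…,2,1)`, and it is not unimodal. -/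
theorem circular_rank_1a1a (a : ℕ) (ha : 0 < a) :
    (∀ k ≤ a, cRank [1, a, 1, a] k = k + 1) ∧
    cRank [1, a, 1, a] (a + 1) = a ∧
    (∀ k, a + 1 < k → k ≤ 2 * a + 2 →
      cRank [1, a, 1, a] k = cRank [1, a, 1, a] (2 * a + 2 - k)) ∧
    ¬ Unimodal (cRank [1, a, 1, a]) (2 * a + 2) :=
  circular_rank_1a1a_general a
end

section
/- Let a, b be positive integers, d = gcd(a,b) and m = lcm(a,b). Rowmotion on the lower ideals of the circular fence poset F̄((a,b)) has exactly one orbit of size m+2 and exactly d−1 orbits of size m, and no other orbits. Moreover, the statistic I ↦ |I| is (a+b)/2-mesic: for every rowmotion orbit O, ∑_{I∈O}|I| = |O|·(a+b)/2. -/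
attribute [local instance] Classical.propDecidable

/-!
On `{0, …, a + b - 1}` the circular fence `F̄((a, b))` is the union of two chains from its minimum
`0` to its maximum `a`, namely `0 < 1 < ⋯ < a` and `0 < a + b - 1 < ⋯ < a + 1 < a`. So besides `∅`
and the whole poset its lower ideals are `{0, …, i} ∪ {a + b - j, …, a + b - 1}` with `i < a`,
`j < b`, and rowmotion acts on these pairs as the translation `(i, j) ↦ (i + 1, j + 1)` of
`ℤ/a × ℤ/b`, except that `(a - 1, b - 1) ↦ univ ↦ ∅ ↦ (0, 0)`. The orbits of the translation are
the `gcd a b` cosets of the diagonal, each of size `lcm a b` and determined by `i - j mod gcd a b`;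
the coset of `(0, 0)` is lengthened by `univ` and `∅`. Along a coset `i` and `j` run `lcm a b / a`
resp. `lcm a b / b` times through all residues, so `|I| = i + 1 + j` averages `(a + b) / 2`, and
so do `∅` and `univ` together.
-/

open Finset Function

theorem Function.minimalPeriod_eq_of_isPeriodicPt {α : Type*} {f : α → α} {x : α} {p : ℕ}
    (hp : IsPeriodicPt f p x) (hp0 : 0 < p) (hlt : ∀ k, 0 < k → k < p → f^[k] x ≠ x) :
    minimalPeriod f x = p :=
  le_antisymm (hp.minimalPeriod_le hp0) (not_lt.mp fun h =>
    hlt _ (hp.minimalPeriod_pos hp0) h iterate_minimalPeriod)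

section Orbit

variable {m : ℕ} {ρ : Finset (Fin m) → Finset (Fin m)} {I : Finset (Fin m)}

theorem mem_orbitOf_iff {J : Finset (Fin m)} : J ∈ orbitOf ρ I ↔ ∃ k, ρ^[k] I = J := by
  simp [orbitOf]

theorem orbitOf_eq_image (h : 0 < minimalPeriod ρ I) :
    orbitOf ρ I = (range (minimalPeriod ρ I)).image (ρ^[·] I) := by
  ext J
  simp only [mem_orbitOf_iff, mem_image, mem_range]
  constructor
  · rintro ⟨k, rfl⟩
    exact ⟨k % minimalPeriod ρ I, Nat.mod_lt _ h, iterate_mod_minimalPeriod_eq⟩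
  · rintro ⟨k, -, rfl⟩
    exact ⟨k, rfl⟩

theorem card_orbitOf (h : 0 < minimalPeriod ρ I) : #(orbitOf ρ I) = minimalPeriod ρ I := by
  rw [orbitOf_eq_image h, card_image_of_injOn (coe_range _ ▸ iterate_injOn_Iio_minimalPeriod),
    card_range]

theorem sum_orbitOf {M : Type*} [AddCommMonoid M] (h : 0 < minimalPeriod ρ I)
    (f : Finset (Fin m) → M) :
    ∑ J ∈ orbitOf ρ I, f J = ∑ t ∈ range (minimalPeriod ρ I), f (ρ^[t] I) := by
  rw [orbitOf_eq_image h, sum_image]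
  intro s hs t ht
  exact iterate_injOn_Iio_minimalPeriod (by simpa using hs) (by simpa using ht)

theorem orbitOf_iterate (h : 0 < minimalPeriod ρ I) (k : ℕ) :
    orbitOf ρ (ρ^[k] I) = orbitOf ρ I := by
  ext J
  simp only [mem_orbitOf_iff, ← iterate_add_apply]
  constructor
  · rintro ⟨s, rfl⟩
    exact ⟨s + k, rfl⟩
  · rintro ⟨s, rfl⟩
    refine ⟨s + (minimalPeriod ρ I - 1) * k, ?_⟩
    rw [add_assoc, ← add_one_mul, Nat.sub_one_add_one h.ne', iterate_add_apply,
      ((isPeriodicPt_minimalPeriod ρ I).mul_const k).eq]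

end Orbit

section PeriodicSum

variable {M : Type*} {f : ℕ → M} {a : ℕ}

theorem Function.Periodic.sum_range_comp_add [AddCancelCommMonoid M] (hf : Periodic f a) (c : ℕ) :
    ∑ t ∈ range a, f (c + t) = ∑ t ∈ range a, f t := by
  induction c with
  | zero => simp
  | succ c ih =>
    have h := (sum_range_succ' (fun t => f (c + t)) a).symm.trans
      (sum_range_succ (fun t => f (c + t)) a)
    rw [hf, add_zero] at h
    simpa [← ih, add_assoc, add_comm 1] using add_right_cancel h

theorem Function.Periodic.sum_range_mul [AddCommMonoid M] (hf : Periodic f a) (k : ℕ) :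
    ∑ t ∈ range (a * k), f t = k • ∑ t ∈ range a, f t := by
  induction k with
  | zero => simp
  | succ k ih =>
    rw [mul_add_one, Finset.sum_range_add, ih, succ_nsmul]
    congr 1
    exact sum_congr rfl fun t _ => by simpa [mul_comm, add_comm] using hf.nat_mul k t

end PeriodicSum

theorem two_mul_sum_range_add_mod {a L : ℕ} (h : a ∣ L) (c : ℕ) :
    2 * ∑ t ∈ range L, (c + t) % a = L * (a - 1) := by
  obtain ⟨k, rfl⟩ := h
  have hper : Periodic (· % a) a := fun t => Nat.add_mod_right t a
  have hper' : Periodic (fun t => (c + t) % a) a := fun t => by simp [← add_assoc]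
  rw [hper'.sum_range_mul, hper.sum_range_comp_add, smul_eq_mul]
  calc 2 * (k * ∑ t ∈ range a, t % a) = k * ((∑ t ∈ range a, t) * 2) := by
        rw [sum_congr rfl fun t ht => Nat.mod_eq_of_lt (mem_range.mp ht)]; ring
    _ = a * k * (a - 1) := by rw [sum_range_id_mul_two]; ring

theorem Nat.exists_forall_iff_lt_of_antitone {S : ℕ → Prop} (hS : Antitone S) {n : ℕ}
    (hn : ¬ S n) : ∃ k ≤ n, ∀ m, S m ↔ m < k := by
  have hex : ∃ m, ¬ S m := ⟨n, hn⟩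
  refine ⟨Nat.find hex, Nat.find_min' hex hn, fun m => ⟨fun hm => ?_, fun hm => ?_⟩⟩
  · exact not_le.mp fun hle => Nat.find_spec hex (hS hle hm)
  · exact not_not.mp (Nat.find_min hex hm)

theorem Nat.add_one_mod_eq_ite {n m : ℕ} (h : n < m) :
    (n + 1) % m = if n + 1 = m then 0 else n + 1 := by
  split_ifs with hm
  · rw [hm, Nat.mod_self]
  · exact Nat.mod_eq_of_lt (by omega)

theorem Nat.mod_add_one_eq_iff_dvd {a n : ℕ} (ha : 0 < a) : n % a + 1 = a ↔ a ∣ n + 1 := by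
  have := Nat.mod_lt n ha
  rw [Nat.dvd_iff_mod_eq_zero, ← Nat.mod_add_mod]
  constructor
  · intro h
    rw [h, Nat.mod_self]
  · intro h
    by_contra hne
    rw [Nat.mod_eq_of_lt (by omega)] at h
    omega

theorem rhoRel_univ {m : ℕ} (r : Fin m → Fin m → Prop) : rhoRel r univ = ∅ := by
  simp [rhoRel]

theorem Nat.exists_lt_lcm_add_mod_eq {a b i j : ℕ} (ha : 0 < a) (hb : 0 < b) (hi : i < a)
    (hj : j < b) : ∃ c < Nat.gcd a b, ∃ t < Nat.lcm a b, (c + t) % a = i ∧ t % b = j := by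
  -- `c` stands for `i - j` modulo `gcd a b`; this makes the congruences `t ≡ i - c [MOD a]` and
  -- `t ≡ j [MOD b]` compatible.
  have hdiv := Nat.mod_add_div (i + b - j) (Nat.gcd a b)
  generalize hc : (i + b - j) % Nat.gcd a b = c at hdiv
  generalize (i + b - j) / Nat.gcd a b = q at hdiv
  have hcd : c < Nat.gcd a b := hc ▸ Nat.mod_lt _ (Nat.gcd_pos_of_pos_left b ha)
  have hda : Nat.gcd a b ≤ a := Nat.gcd_le_left b ha
  have hcompat : i + a - c ≡ j [MOD Nat.gcd a b] := by
    rw [Nat.modEq_iff_dvd]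
    have hda' : (Nat.gcd a b : ℤ) ∣ a := Int.natCast_dvd_natCast.mpr (Nat.gcd_dvd_left a b)
    have hdb' : (Nat.gcd a b : ℤ) ∣ b := Int.natCast_dvd_natCast.mpr (Nat.gcd_dvd_right a b)
    zify [show c ≤ i + a by omega, show j ≤ i + b by omega] at hdiv ⊢
    rw [show (j : ℤ) - (i + a - c) = b - a - Nat.gcd a b * q by linarith]
    exact _root_.dvd_sub (_root_.dvd_sub hdb' hda') (dvd_mul_right _ _)
  obtain ⟨k, hka, hkb⟩ := Nat.chineseRemainder' hcompat
  refine ⟨c, hcd, k % Nat.lcm a b, Nat.mod_lt _ (Nat.lcm_pos ha hb), ?_, ?_⟩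
  · rw [Nat.add_mod, Nat.mod_mod_of_dvd _ (Nat.dvd_lcm_left a b), hka, ← Nat.add_mod,
      show c + (i + a - c) = i + a by omega, Nat.add_mod_right, Nat.mod_eq_of_lt hi]
  · rw [Nat.mod_mod_of_dvd _ (Nat.dvd_lcm_right a b), hkb, Nat.mod_eq_of_lt hj]

namespace CircularFence

variable {a b : ℕ}

theorem upEdge_pair_iff (e : ℕ) : upEdge [a, b] e ↔ e < a ∨ a + b ≤ e := by
  by_cases h : a ≤ e <;> by_cases h2 : a + b ≤ e <;>
    simp [upEdge, segIdx, List.range_succ, h, h2, Nat.even_iff] <;> omega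

theorem val_lt_add (x : Fin [a, b].sum) : x.val < a + b := by
  simpa using x.isLt

theorem cStep_iff (hb : 0 < b) (x y : Fin [a, b].sum) :
    cStep [a, b] x y ↔ (y.val = x.val + 1 ∧ x.val < a) ∨ (x.val = y.val + 1 ∧ a ≤ y.val) ∨
      (x.val = 0 ∧ y.val + 1 = a + b) := by
  have hx := val_lt_add x
  have hy := val_lt_add y
  simp only [cStep, upEdge_pair_iff, List.sum_cons, List.sum_nil, add_zero,
    Nat.add_one_mod_eq_ite hx, Nat.add_one_mod_eq_ite hy]
  split_ifs <;> omega

theorem cLE_of_le_of_le (hb : 0 < b) {x y : Fin [a, b].sum} (hxy : x.val ≤ y.val) (hy : y.val ≤ a) :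
    cLE [a, b] x y := by
  obtain ⟨n, hn⟩ := y
  induction n with
  | zero => exact (Fin.ext (by simp at hxy; omega) : x = ⟨0, hn⟩) ▸ .refl
  | succ n ih =>
    rcases (show x.val = n + 1 ∨ x.val ≤ n by simp at hxy; omega) with hx | hx
    · exact (Fin.ext hx : x = ⟨n + 1, hn⟩) ▸ .refl
    · exact (ih (by omega) hx (by simp at hy ⊢; omega)).tail
        ((cStep_iff hb _ _).mpr (Or.inl ⟨rfl, by simp at hy ⊢; omega⟩))

theorem cLE_of_ge_of_ge (hb : 0 < b) {x y : Fin [a, b].sum} (hyx : y.val ≤ x.val) (hy : a ≤ y.val) :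
    cLE [a, b] x y := by
  obtain ⟨n, hn⟩ := x
  induction n with
  | zero => exact (Fin.ext (by simp at hyx ⊢; omega) : y = ⟨0, hn⟩) ▸ .refl
  | succ n ih =>
    rcases (show y.val = n + 1 ∨ y.val ≤ n by simp at hyx; omega) with hy' | hy'
    · exact (Fin.ext hy' : y = ⟨n + 1, hn⟩) ▸ .refl
    · exact .head ((cStep_iff hb _ _).mpr (Or.inr (Or.inl ⟨rfl, by simp; omega⟩)))
        (ih (by omega) hy')

theorem cLE_iff (ha : 0 < a) (hb : 0 < b) (x y : Fin [a, b].sum) :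
    cLE [a, b] x y ↔ (x.val ≤ y.val ∧ y.val ≤ a) ∨ (a ≤ y.val ∧ (y.val ≤ x.val ∨ x.val = 0)) := by
  have hy := val_lt_add y
  constructor
  · intro h
    induction h using Relation.ReflTransGen.head_induction_on with
    | refl => omega
    | @head u v hstep _ ih =>
      rw [cStep_iff hb] at hstep
      have := val_lt_add u
      omega
  · rintro (⟨hxy, hya⟩ | ⟨hay, hyx | hx0⟩)
    · exact cLE_of_le_of_le hb hxy hya
    · exact cLE_of_ge_of_ge hb hyx hay
    · let last : Fin [a, b].sum := ⟨a + b - 1, by simp; omega⟩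
      exact .head ((cStep_iff hb x last).mpr (Or.inr (Or.inr ⟨hx0, by simp [last]; omega⟩)))
        (cLE_of_ge_of_ge hb (by simp [last]; omega) hay)

def ideal (a b i j : ℕ) : Finset (Fin [a, b].sum) :=
  univ.filter fun x => x.val ≤ i ∨ a + b - j ≤ x.val

theorem mem_ideal {i j : ℕ} {x : Fin [a, b].sum} :
    x ∈ ideal a b i j ↔ x.val ≤ i ∨ a + b - j ≤ x.val := by
  simp only [ideal, mem_filter, mem_univ, true_and]

theorem isCIdeal_ideal (ha : 0 < a) (hb : 0 < b) {i j : ℕ} (hi : i < a) (hj : j < b) :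
    IsCIdeal [a, b] (ideal a b i j) := by
  intro x y hxy hy
  rw [cLE_iff ha hb] at hxy
  rw [mem_ideal] at hy ⊢
  have := val_lt_add x
  omega

theorem card_ideal {i j : ℕ} (hi : i < a) (hj : j < b) : #(ideal a b i j) = i + 1 + j := by
  have hval : (ideal a b i j).map Fin.valEmbedding = range (i + 1) ∪ Ico (a + b - j) (a + b) := by
    ext v
    simp only [Finset.mem_map, Fin.valEmbedding_apply, mem_union, mem_range, mem_Ico]
    constructor
    · rintro ⟨x, hx, rfl⟩
      have := val_lt_add x
      rw [mem_ideal] at hx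
      omega
    · intro hv
      exact ⟨⟨v, by simp; omega⟩, mem_ideal.mpr (by simp only; omega), rfl⟩
  rw [← card_map Fin.valEmbedding, hval, card_union_of_disjoint, card_range, Nat.card_Ico]
  · omega
  · exact disjoint_left.mpr fun v h1 h2 => by simp only [mem_range, mem_Ico] at h1 h2; omega

theorem ideal_injective {i j i' j' : ℕ} (hi : i < a) (hj : j < b) (hi' : i' < a) (hj' : j' < b)
    (h : ideal a b i j = ideal a b i' j') : i = i' ∧ j = j' := by
  have key (v : ℕ) (hv : v < [a, b].sum) :
      v ≤ i ∨ a + b - j ≤ v ↔ v ≤ i' ∨ a + b - j' ≤ v := by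
    have hmem := mem_ideal (a := a) (b := b) (i := i) (j := j) (x := ⟨v, hv⟩)
    rwa [h, mem_ideal, Iff.comm] at hmem
  refine ⟨?_, ?_⟩
  · have := key i (by simp; omega)
    have := key i' (by simp; omega)
    omega
  · rcases Nat.lt_trichotomy j j' with hlt | heq | hgt
    · have := key (a + b - j') (by simp; omega)
      omega
    · exact heq
    · have := key (a + b - j) (by simp; omega)
      omega

theorem eq_ideal_of_isCIdeal (ha : 0 < a) (hb : 0 < b) {I : Finset (Fin [a, b].sum)}
    (hI : IsCIdeal [a, b] I) :
    I = ∅ ∨ I = univ ∨ ∃ i < a, ∃ j < b, I = ideal a b i j := by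
  have hdown {x y : Fin [a, b].sum} (hxy : (x.val ≤ y.val ∧ y.val ≤ a) ∨
      (a ≤ y.val ∧ (y.val ≤ x.val ∨ x.val = 0))) (hy : y ∈ I) : x ∈ I :=
    hI x y ((cLE_iff ha hb x y).mpr hxy) hy
  let top : Fin [a, b].sum := ⟨a, by simp; omega⟩
  by_cases htop : top ∈ I
  · refine Or.inr (Or.inl (eq_univ_of_forall fun x => hdown ?_ htop))
    have := val_lt_add x
    simp only [top]
    omega
  rcases I.eq_empty_or_nonempty with hempty | ⟨w, hw⟩
  · exact Or.inl hempty
  refine Or.inr (Or.inr ?_)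
  have hbot : (⟨0, by simp; omega⟩ : Fin [a, b].sum) ∈ I := hdown (by simp; omega) hw
  -- `I` meets the chain `0 < 1 < ⋯ < a` in its first `p` elements and the chain
  -- `a + b - 1 < ⋯ < a` in its first `q` elements.
  obtain ⟨p, hpa, hp⟩ := Nat.exists_forall_iff_lt_of_antitone
    (S := fun m => m ≤ a ∧ ∃ y ∈ I, y.val = m)
    (fun m n hmn ⟨hna, y, hy, hyn⟩ => ⟨hmn.trans hna, ⟨m, by simp; omega⟩,
      hdown (by simp only; omega) hy, rfl⟩)
    (n := a) fun ⟨_, y, hy, hya⟩ => htop ((Fin.ext hya : y = top) ▸ hy)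
  obtain ⟨q, hqb, hq⟩ := Nat.exists_forall_iff_lt_of_antitone
    (S := fun m => m ≤ b - 1 ∧ ∃ y ∈ I, y.val = a + b - 1 - m)
    (fun m n hmn ⟨hnb, y, hy, hyn⟩ => ⟨hmn.trans hnb, ⟨a + b - 1 - m, by simp; omega⟩,
      hdown (by simp only; omega) hy, rfl⟩)
    (n := b - 1) fun ⟨_, y, hy, hya⟩ => htop ((Fin.ext (by simp only [top]; omega) : y = top) ▸ hy)
  have hp0 := (hp 0).mp ⟨Nat.zero_le a, _, hbot, rfl⟩
  refine ⟨p - 1, by omega, q, by omega, ?_⟩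
  ext x
  have hx := val_lt_add x
  rw [mem_ideal]
  rcases lt_trichotomy x.val a with hxa | hxa | hxa
  · rw [show x.val ≤ p - 1 ∨ a + b - q ≤ x.val ↔ x.val < p by omega, ← hp]
    exact ⟨fun h => ⟨hxa.le, x, h, rfl⟩, fun ⟨_, y, hy, hyx⟩ => (Fin.ext hyx : y = x) ▸ hy⟩
  · rw [(Fin.ext hxa : x = top)]
    exact iff_of_false htop (by simp only [top]; omega)
  · rw [show x.val ≤ p - 1 ∨ a + b - q ≤ x.val ↔ a + b - 1 - x.val < q by omega, ← hq]
    exact ⟨fun h => ⟨by omega, x, h, by omega⟩,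
      fun ⟨_, y, hy, hyx⟩ => (Fin.ext (by omega) : y = x) ▸ hy⟩

theorem minimal_notMem_ideal_iff (ha : 0 < a) (hb : 0 < b) {i j : ℕ} (hi : i < a) (hj : j < b)
    (y : Fin [a, b].sum) :
    (y ∉ ideal a b i j ∧ ∀ z, cLE [a, b] z y → z ≠ y → z ∈ ideal a b i j) ↔
      (y.val = i + 1 ∧ i + 1 < a) ∨ (y.val = a + b - 1 - j ∧ j + 1 < b) ∨
        (y.val = a ∧ i + 1 = a ∧ j + 1 = b) := by
  have hy := val_lt_add y
  simp only [mem_ideal, cLE_iff ha hb, ne_eq, Fin.ext_iff]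
  constructor
  · rintro ⟨hyI, hmin⟩
    have h1 := hmin ⟨i + 1, by simp; omega⟩
    have h2 := hmin ⟨a + b - 1 - j, by simp; omega⟩
    simp only at h1 h2
    omega
  · intro h
    refine ⟨by omega, fun z hzy hne => ?_⟩
    have := val_lt_add z
    omega

theorem rhoRel_ideal (ha : 0 < a) (hb : 0 < b) {i j : ℕ} (hi : i < a) (hj : j < b)
    (hlast : ¬ (i + 1 = a ∧ j + 1 = b)) :
    rhoRel (cLE [a, b]) (ideal a b i j) = ideal a b ((i + 1) % a) ((j + 1) % b) := by
  ext x
  have hx := val_lt_add x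
  simp only [rhoRel, mem_filter, mem_univ, true_and, ← and_assoc,
    minimal_notMem_ideal_iff ha hb hi hj]
  simp only [cLE_iff ha hb, mem_ideal, Nat.add_one_mod_eq_ite hi, Nat.add_one_mod_eq_ite hj]
  split_ifs with hia hjb hjb
  all_goals refine ⟨fun ⟨y, hy, hxy⟩ => by have := val_lt_add y; omega, fun hmem => ?_⟩
  -- The witness is `i + 1` if it is a minimal non-member above `x`, else `a + b - 1 - j`.
  all_goals by_cases hleft : i + 1 < a ∧ x.val ≤ i + 1
  all_goals first
    | exact ⟨⟨i + 1, by simp; omega⟩, by dsimp only; omega, by dsimp only; omega⟩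
    | exact ⟨⟨a + b - 1 - j, by simp; omega⟩, by dsimp only; omega, by dsimp only; omega⟩

theorem rhoRel_ideal_last (ha : 0 < a) (hb : 0 < b) {i j : ℕ} (hi : i + 1 = a) (hj : j + 1 = b) :
    rhoRel (cLE [a, b]) (ideal a b i j) = univ := by
  refine eq_univ_of_forall fun x => ?_
  have hx := val_lt_add x
  simp only [rhoRel, mem_filter, mem_univ, true_and, ← and_assoc,
    minimal_notMem_ideal_iff ha hb (by omega : i < a) (by omega : j < b)]
  exact ⟨⟨a, by simp; omega⟩, by dsimp only; omega, (cLE_iff ha hb _ _).mpr (by dsimp only; omega)⟩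

theorem rhoRel_empty (ha : 0 < a) (hb : 0 < b) : rhoRel (cLE [a, b]) ∅ = ideal a b 0 0 := by
  ext x
  have hx := val_lt_add x
  simp only [rhoRel, mem_filter, mem_univ, true_and, notMem_empty, not_false_eq_true,
    imp_false, not_not, mem_ideal, cLE_iff ha hb, Fin.ext_iff]
  constructor
  · rintro ⟨y, hmin, hxy⟩
    have := hmin ⟨0, by simp; omega⟩
    dsimp only at this
    omega
  · intro hx0
    exact ⟨⟨0, by simp; omega⟩, fun z hz => by dsimp only at hz ⊢; omega, by dsimp only; omega⟩

theorem iterate_rhoRel_ideal (ha : 0 < a) (hb : 0 < b) {i j t : ℕ}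
    (h : ∀ s < t, ¬ (a ∣ i + s + 1 ∧ b ∣ j + s + 1)) :
    (rhoRel (cLE [a, b]))^[t] (ideal a b (i % a) (j % b)) =
      ideal a b ((i + t) % a) ((j + t) % b) := by
  induction t with
  | zero => rfl
  | succ t ih =>
    have hlast : ¬ ((i + t) % a + 1 = a ∧ (j + t) % b + 1 = b) := by
      rw [Nat.mod_add_one_eq_iff_dvd ha, Nat.mod_add_one_eq_iff_dvd hb]
      exact h t (by omega)
    rw [iterate_succ_apply', ih fun s hs => h s (by omega),
      rhoRel_ideal ha hb (Nat.mod_lt _ ha) (Nat.mod_lt _ hb) hlast, Nat.mod_add_mod,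
      Nat.mod_add_mod, ← add_assoc, ← add_assoc]

theorem iterate_succ_rhoRel_empty (ha : 0 < a) (hb : 0 < b) {t : ℕ} (ht : t < Nat.lcm a b) :
    (rhoRel (cLE [a, b]))^[t + 1] ∅ = ideal a b (t % a) (t % b) := by
  have h := iterate_rhoRel_ideal ha hb (i := 0) (j := 0) (t := t) fun s hs ⟨hsa, hsb⟩ =>
    absurd (Nat.le_of_dvd (by omega) (Nat.lcm_dvd hsa hsb)) (by omega)
  simp only [Nat.zero_mod, zero_add] at h
  rwa [iterate_succ_apply, rhoRel_empty ha hb]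

theorem iterate_rhoRel_empty_lcm_add_one (ha : 0 < a) (hb : 0 < b) :
    (rhoRel (cLE [a, b]))^[Nat.lcm a b + 1] ∅ = univ := by
  have hL := Nat.lcm_pos ha hb
  have hLa := Nat.dvd_lcm_left a b
  have hLb := Nat.dvd_lcm_right a b
  obtain ⟨t, ht⟩ : ∃ t, Nat.lcm a b = t + 1 := ⟨_, (Nat.succ_pred_eq_of_pos hL).symm⟩
  rw [iterate_succ_apply', ht, iterate_succ_rhoRel_empty ha hb (by omega)]
  exact rhoRel_ideal_last ha hb ((Nat.mod_add_one_eq_iff_dvd ha).mpr (ht ▸ hLa))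
    ((Nat.mod_add_one_eq_iff_dvd hb).mpr (ht ▸ hLb))

theorem minimalPeriod_rhoRel_empty (ha : 0 < a) (hb : 0 < b) :
    minimalPeriod (rhoRel (cLE [a, b])) ∅ = Nat.lcm a b + 2 := by
  refine minimalPeriod_eq_of_isPeriodicPt ?_ (by omega) fun k hk0 hk h => ?_
  · rw [IsPeriodicPt, IsFixedPt, show Nat.lcm a b + 2 = 1 + (Nat.lcm a b + 1) by omega,
      iterate_add_apply, iterate_rhoRel_empty_lcm_add_one ha hb, iterate_one, rhoRel_univ]
  · have hcard := congrArg card h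
    rw [card_empty] at hcard
    obtain ⟨t, rfl⟩ : ∃ t, k = t + 1 := ⟨k - 1, by omega⟩
    rcases Nat.lt_or_ge t (Nat.lcm a b) with ht | ht
    · rw [iterate_succ_rhoRel_empty ha hb ht, card_ideal (Nat.mod_lt _ ha) (Nat.mod_lt _ hb)]
        at hcard
      omega
    · rw [show t = Nat.lcm a b by omega, iterate_rhoRel_empty_lcm_add_one ha hb, card_univ,
        Fintype.card_fin, List.sum_cons, List.sum_cons, List.sum_nil] at hcard
      omega

theorem iterate_rhoRel_ideal_zero (ha : 0 < a) (hb : 0 < b) {c : ℕ} (hc : c ∈ Ioo 0 (Nat.gcd a b))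
    (t : ℕ) : (rhoRel (cLE [a, b]))^[t] (ideal a b c 0) = ideal a b ((c + t) % a) (t % b) := by
  obtain ⟨hc0, hcd⟩ := mem_Ioo.mp hc
  have hca : c < a := hcd.trans_le (Nat.gcd_le_left b ha)
  have h := iterate_rhoRel_ideal ha hb (i := c) (j := 0) (t := t) fun s _ ⟨hsa, hsb⟩ => by
    have hdc : Nat.gcd a b ∣ c := by
      rw [← Nat.dvd_add_left ((Nat.gcd_dvd_right a b).trans (by simpa using hsb)), ← add_assoc]
      exact (Nat.gcd_dvd_left a b).trans hsa
    exact absurd (Nat.le_of_dvd hc0 hdc) (by omega)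
  simpa [Nat.mod_eq_of_lt hca] using h

theorem minimalPeriod_rhoRel_ideal_zero (ha : 0 < a) (hb : 0 < b) {c : ℕ}
    (hc : c ∈ Ioo 0 (Nat.gcd a b)) :
    minimalPeriod (rhoRel (cLE [a, b])) (ideal a b c 0) = Nat.lcm a b := by
  have hca : c < a := (mem_Ioo.mp hc).2.trans_le (Nat.gcd_le_left b ha)
  have hperiod {k : ℕ} (hk : (rhoRel (cLE [a, b]))^[k] (ideal a b c 0) = ideal a b c 0) :
      Nat.lcm a b ∣ k := by
    rw [iterate_rhoRel_ideal_zero ha hb hc] at hk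
    obtain ⟨hka, hkb⟩ := ideal_injective (Nat.mod_lt _ ha) (Nat.mod_lt _ hb) hca hb hk
    refine Nat.lcm_dvd ?_ (Nat.dvd_of_mod_eq_zero hkb)
    exact (Nat.modEq_zero_iff_dvd).mp
      (Nat.ModEq.add_left_cancel' c (by rw [add_zero]; exact hka.trans (Nat.mod_eq_of_lt hca).symm))
  refine minimalPeriod_eq_of_isPeriodicPt ?_ (Nat.lcm_pos ha hb)
    fun k hk0 hk h => absurd (Nat.le_of_dvd hk0 (hperiod h)) (by omega)
  rw [IsPeriodicPt, IsFixedPt, iterate_rhoRel_ideal_zero ha hb hc,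
    Nat.mod_eq_zero_of_dvd (Nat.dvd_lcm_right a b)]
  obtain ⟨k, hk⟩ := Nat.dvd_lcm_left a b
  rw [hk, Nat.add_mul_mod_self_left, Nat.mod_eq_of_lt hca]

theorem orbitOf_eq_orbitOf_empty_or_ideal_zero (ha : 0 < a) (hb : 0 < b)
    {I : Finset (Fin [a, b].sum)} (hI : IsCIdeal [a, b] I) :
    orbitOf (rhoRel (cLE [a, b])) I = orbitOf (rhoRel (cLE [a, b])) ∅ ∨
      ∃ c ∈ Ioo 0 (Nat.gcd a b),
        orbitOf (rhoRel (cLE [a, b])) I = orbitOf (rhoRel (cLE [a, b])) (ideal a b c 0) := by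
  have hempty : 0 < minimalPeriod (rhoRel (cLE [a, b])) ∅ := by
    rw [minimalPeriod_rhoRel_empty ha hb]
    omega
  rcases eq_ideal_of_isCIdeal ha hb hI with rfl | rfl | ⟨i, hi, j, hj, rfl⟩
  · exact Or.inl rfl
  · rw [← iterate_rhoRel_empty_lcm_add_one ha hb]
    exact Or.inl (orbitOf_iterate hempty _)
  obtain ⟨c, hcd, t, htL, rfl, rfl⟩ := Nat.exists_lt_lcm_add_mod_eq ha hb hi hj
  rcases Nat.eq_zero_or_pos c with rfl | hc
  · rw [zero_add, ← iterate_succ_rhoRel_empty ha hb htL]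
    exact Or.inl (orbitOf_iterate hempty _)
  · have hc' : c ∈ Ioo 0 (Nat.gcd a b) := mem_Ioo.mpr ⟨hc, hcd⟩
    refine Or.inr ⟨c, hc', ?_⟩
    rw [← iterate_rhoRel_ideal_zero ha hb hc']
    refine orbitOf_iterate ?_ _
    rw [minimalPeriod_rhoRel_ideal_zero ha hb hc']
    exact Nat.lcm_pos ha hb

theorem injOn_orbitOf_ideal_zero (ha : 0 < a) (hb : 0 < b) :
    Set.InjOn (fun c => orbitOf (rhoRel (cLE [a, b])) (ideal a b c 0)) (Ioo 0 (Nat.gcd a b)) := by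
  intro c hc c' hc' h
  rw [mem_coe] at hc hc'
  have hmem : ideal a b c' 0 ∈ orbitOf (rhoRel (cLE [a, b])) (ideal a b c 0) := by
    rw [show orbitOf _ (ideal a b c 0) = orbitOf _ (ideal a b c' 0) from h]
    exact mem_orbitOf_iff.mpr ⟨0, rfl⟩
  obtain ⟨k, hk⟩ := mem_orbitOf_iff.mp hmem
  rw [iterate_rhoRel_ideal_zero ha hb hc] at hk
  obtain ⟨hka, hkb⟩ := ideal_injective (Nat.mod_lt _ ha) (Nat.mod_lt _ hb)
    ((mem_Ioo.mp hc').2.trans_le (Nat.gcd_le_left b ha)) hb hk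
  obtain ⟨q, hq⟩ := (Nat.gcd_dvd_right a b).trans (Nat.dvd_of_mod_eq_zero hkb)
  have hmod := congrArg (· % Nat.gcd a b) hka
  simp only [Nat.mod_mod_of_dvd _ (Nat.gcd_dvd_left a b), hq, Nat.add_mul_mod_self_left,
    Nat.mod_eq_of_lt (mem_Ioo.mp hc).2, Nat.mod_eq_of_lt (mem_Ioo.mp hc').2] at hmod
  exact hmod

theorem card_orbitOf_empty (ha : 0 < a) (hb : 0 < b) :
    #(orbitOf (rhoRel (cLE [a, b])) ∅) = Nat.lcm a b + 2 := by
  rw [card_orbitOf (by rw [minimalPeriod_rhoRel_empty ha hb]; omega),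
    minimalPeriod_rhoRel_empty ha hb]

theorem card_orbitOf_ideal_zero (ha : 0 < a) (hb : 0 < b) {c : ℕ} (hc : c ∈ Ioo 0 (Nat.gcd a b)) :
    #(orbitOf (rhoRel (cLE [a, b])) (ideal a b c 0)) = Nat.lcm a b := by
  rw [card_orbitOf (by rw [minimalPeriod_rhoRel_ideal_zero ha hb hc]; exact Nat.lcm_pos ha hb),
    minimalPeriod_rhoRel_ideal_zero ha hb hc]

theorem two_mul_sum_card_ideal_add_mod (ha : 0 < a) (hb : 0 < b) (i j : ℕ) :
    2 * ∑ t ∈ range (Nat.lcm a b), #(ideal a b ((i + t) % a) ((j + t) % b)) =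
      Nat.lcm a b * (a + b) := by
  simp only [card_ideal (Nat.mod_lt _ ha) (Nat.mod_lt _ hb), sum_add_distrib, sum_const, card_range,
    smul_eq_mul, mul_one, mul_add, two_mul_sum_range_add_mod (Nat.dvd_lcm_left a b),
    two_mul_sum_range_add_mod (Nat.dvd_lcm_right a b)]
  obtain ⟨a, rfl⟩ := Nat.exists_eq_add_one_of_ne_zero ha.ne'
  obtain ⟨b, rfl⟩ := Nat.exists_eq_add_one_of_ne_zero hb.ne'
  simp only [Nat.add_sub_cancel]
  ring

theorem two_mul_sum_card_orbitOf_empty (ha : 0 < a) (hb : 0 < b) :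
    2 * ∑ J ∈ orbitOf (rhoRel (cLE [a, b])) ∅, #J = (Nat.lcm a b + 2) * (a + b) := by
  rw [sum_orbitOf (by rw [minimalPeriod_rhoRel_empty ha hb]; omega),
    minimalPeriod_rhoRel_empty ha hb, sum_range_succ, sum_range_succ',
    iterate_rhoRel_empty_lcm_add_one ha hb,
    sum_congr rfl fun t ht => by rw [iterate_succ_rhoRel_empty ha hb (mem_range.mp ht)]]
  have hrun := two_mul_sum_card_ideal_add_mod ha hb 0 0
  simp only [zero_add] at hrun
  rw [iterate_zero_apply, card_empty, card_univ, Fintype.card_fin]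
  generalize ∑ t ∈ range (Nat.lcm a b), #(ideal a b (t % a) (t % b)) = S at hrun ⊢
  simp only [List.sum_cons, List.sum_nil]
  linarith

theorem two_mul_sum_card_orbitOf_ideal_zero (ha : 0 < a) (hb : 0 < b) {c : ℕ}
    (hc : c ∈ Ioo 0 (Nat.gcd a b)) :
    2 * ∑ J ∈ orbitOf (rhoRel (cLE [a, b])) (ideal a b c 0), #J = Nat.lcm a b * (a + b) := by
  rw [sum_orbitOf (by rw [minimalPeriod_rhoRel_ideal_zero ha hb hc]; exact Nat.lcm_pos ha hb),
    minimalPeriod_rhoRel_ideal_zero ha hb hc]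
  simpa only [iterate_rhoRel_ideal_zero ha hb hc, zero_add] using
    two_mul_sum_card_ideal_add_mod ha hb c 0

theorem exists_isCIdeal_orbitOf_eq_iff (ha : 0 < a) (hb : 0 < b)
    (O : Finset (Finset (Fin [a, b].sum))) :
    (∃ I, IsCIdeal [a, b] I ∧ O = orbitOf (rhoRel (cLE [a, b])) I) ↔
      O = orbitOf (rhoRel (cLE [a, b])) ∅ ∨
        ∃ c ∈ Ioo 0 (Nat.gcd a b), O = orbitOf (rhoRel (cLE [a, b])) (ideal a b c 0) := by
  constructor
  · rintro ⟨I, hI, rfl⟩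
    exact orbitOf_eq_orbitOf_empty_or_ideal_zero ha hb hI
  · rintro (rfl | ⟨c, hc, rfl⟩)
    · exact ⟨∅, fun _ _ _ h => absurd h (notMem_empty _), rfl⟩
    · have hca := (mem_Ioo.mp hc).2.trans_le (Nat.gcd_le_left b ha)
      exact ⟨_, isCIdeal_ideal ha hb hca hb, rfl⟩

theorem exists_orbitOf_and_card_eq_lcm_add_two_iff (ha : 0 < a) (hb : 0 < b)
    (O : Finset (Finset (Fin [a, b].sum))) :
    ((∃ I, IsCIdeal [a, b] I ∧ O = orbitOf (rhoRel (cLE [a, b])) I) ∧ #O = Nat.lcm a b + 2) ↔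
      O = orbitOf (rhoRel (cLE [a, b])) ∅ := by
  rw [exists_isCIdeal_orbitOf_eq_iff ha hb]
  constructor
  · rintro ⟨h | ⟨c, hc, rfl⟩, hcard⟩
    · exact h
    · rw [card_orbitOf_ideal_zero ha hb hc] at hcard
      omega
  · rintro rfl
    exact ⟨Or.inl rfl, card_orbitOf_empty ha hb⟩

theorem exists_orbitOf_and_card_eq_lcm_iff (ha : 0 < a) (hb : 0 < b)
    (O : Finset (Finset (Fin [a, b].sum))) :
    ((∃ I, IsCIdeal [a, b] I ∧ O = orbitOf (rhoRel (cLE [a, b])) I) ∧ #O = Nat.lcm a b) ↔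
      O ∈ (Ioo 0 (Nat.gcd a b)).image fun c => orbitOf (rhoRel (cLE [a, b])) (ideal a b c 0) := by
  rw [exists_isCIdeal_orbitOf_eq_iff ha hb, mem_image]
  constructor
  · rintro ⟨rfl | ⟨c, hc, rfl⟩, hcard⟩
    · rw [card_orbitOf_empty ha hb] at hcard
      omega
    · exact ⟨c, hc, rfl⟩
  · rintro ⟨c, hc, rfl⟩
    exact ⟨Or.inr ⟨c, hc, rfl⟩, card_orbitOf_ideal_zero ha hb hc⟩

end CircularFence

open CircularFence

/-- rowmotion on the lower ideals of `F̄((a,b))` has exactly one orbit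
of size `lcm(a,b) + 2` and exactly `gcd(a,b) − 1` orbits of size `lcm(a,b)`, and no
other orbits; moreover the statistic `I ↦ |I|` is `(a+b)/2`-mesic. -/
theorem rowmotion_two_parts (a b : ℕ) (ha : 0 < a) (hb : 0 < b) :
    (∀ I : Finset (Fin ([a, b].sum)), IsCIdeal [a, b] I →
      (orbitOf (rhoRel (cLE [a, b])) I).card = Nat.lcm a b + 2 ∨
      (orbitOf (rhoRel (cLE [a, b])) I).card = Nat.lcm a b) ∧
    Nat.card {O : Finset (Finset (Fin ([a, b].sum))) //
      (∃ I, IsCIdeal [a, b] I ∧ O = orbitOf (rhoRel (cLE [a, b])) I) ∧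
        O.card = Nat.lcm a b + 2} = 1 ∧
    Nat.card {O : Finset (Finset (Fin ([a, b].sum))) //
      (∃ I, IsCIdeal [a, b] I ∧ O = orbitOf (rhoRel (cLE [a, b])) I) ∧
        O.card = Nat.lcm a b} = Nat.gcd a b - 1 ∧
    ∀ I : Finset (Fin ([a, b].sum)), IsCIdeal [a, b] I →
      2 * (∑ J ∈ orbitOf (rhoRel (cLE [a, b])) I, J.card) =
        (orbitOf (rhoRel (cLE [a, b])) I).card * (a + b) := by
  refine ⟨fun I hI => ?_, ?_, ?_, fun I hI => ?_⟩
  · rcases orbitOf_eq_orbitOf_empty_or_ideal_zero ha hb hI with h | ⟨c, hc, h⟩ <;> rw [h]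
    · exact Or.inl (card_orbitOf_empty ha hb)
    · exact Or.inr (card_orbitOf_ideal_zero ha hb hc)
  · rw [Nat.card_congr (Equiv.subtypeEquivRight (exists_orbitOf_and_card_eq_lcm_add_two_iff ha hb)),
      Nat.card_unique]
  · rw [Nat.card_congr (Equiv.subtypeEquivRight (exists_orbitOf_and_card_eq_lcm_iff ha hb)),
      Nat.card_eq_finsetCard, card_image_of_injOn (injOn_orbitOf_ideal_zero ha hb), Nat.card_Ioo,
      Nat.sub_zero]
  · rcases orbitOf_eq_orbitOf_empty_or_ideal_zero ha hb hI with h | ⟨c, hc, h⟩ <;> rw [h]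
    · rw [two_mul_sum_card_orbitOf_empty ha hb, card_orbitOf_empty ha hb]
    · rw [two_mul_sum_card_orbitOf_ideal_zero ha hb hc, card_orbitOf_ideal_zero ha hb hc]
end
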